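/- arXiv:math/0607757 — 9 statements merged into one kernel-verified Lean document; each statement's English description precedes it below -/
import Mathlib

section
/- Fix integers d ≥ 2 and 1 ≤ ℓ ≤ d−1. For every ε > 0 there exists an integer N ≥ 1 with the following property. Let B be a linear automorphism of ℂ^d admitting a basis of eigenvectors θ_1,…,θ_d whose eigenvalues have pairwise distinct absolute values, and let W ⊆ ℂ^d be a subspace of dimension d−ℓ such that W ∩ span{θ_i : i ∈ S} = {0} for every S ⊆ {1,…,d} with #S = ℓ. Then for every ε-dense subset J ⊆ {0,1,…,N−1} there is no ℓ-dimensional subspace E ⊆ ℂ^d satisfying E ∩ B^j(W) ≠ {0} for every j ∈ J. (Equivalently, the iterates ⋂_{j∈J} B^j(V) of the hyperplane section V = {E : dim E = ℓ, E ∩ W ≠ {0}} of the Grassmannian have empty intersection.) -/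
/-!
In coordinates for the eigenbasis `θ`, the rows of the matrix `[E | B^j W]` are `u_i + μ_i^j v_i`,
so by multilinearity of the determinant `E ∩ B^j W ≠ 0` forces `∑_S c_S λ_S^j = 0`, where
`λ_S = ∏_{i ∈ S} μ_i` and `c_S` is a mixed minor. Given the hypothesis on `W`, `c_S ≠ 0` exactly
when the `θ_i mod E`, `i ∈ S`, form a basis of `V ⧸ E`. Since the `|μ_i|` are distinct, the
exchange property of bases makes the heaviest such basis unique, so the exponential sum has a
strictly dominant term. Such a sum cannot vanish on an `ε`-dense `J ⊆ [0, N)` once `N` is large in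
terms of `ε` and the number of terms only: some shift `t ≤ T` keeps `J ∩ (J - t)` dense, and
`f (j + t) - λ^t f j` has one term fewer, so induction on the number of terms applies.
-/

open Finset Filter Module Submodule Function Matrix

theorem exists_dense_shift {ε : ℝ} {T N : ℕ} (hεT : 4 ≤ ε * T) (hTN : T ≤ N)
    {J : Finset ℕ} (hJ : J ⊆ range N) (hJε : ε * N ≤ #J) :
    ∃ t ∈ Icc 1 T, ε / (2 * T) * N ≤ #{j ∈ J | j + t ∈ J} := by
  have hT : 0 < T := Nat.pos_of_ne_zero fun h => by simp [h] at hεT; linarith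
  have hε : 0 < ε := pos_of_mul_pos_left (by linarith) (Nat.cast_nonneg T)
  set good := {j ∈ J | ∃ t ∈ Icc 1 T, j + t ∈ J}
  -- elements of `J` with no successor in `J` within `T` lie in distinct blocks `[qT, qT + T)`
  have hbad : #(J \ good) ≤ N / T + 1 := by
    refine (card_le_card_of_injOn (· / T) (fun a ha => ?_) fun a ha b hb hab => ?_).trans
      (card_range _).le
    · simp only [coe_range, Set.mem_Iio]
      exact Nat.lt_succ_of_le (Nat.div_le_div_right (mem_range.1 (hJ (mem_sdiff.1 ha).1)).le)
    · by_contra hne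
      wlog hlt : a < b generalizing a b
      · exact this b hb a ha hab.symm (Ne.symm hne) (by omega)
      obtain ⟨haJ, hagood⟩ := mem_sdiff.1 (mem_coe.1 ha)
      have hba : b < a + T := by
        have h₁ := Nat.lt_div_mul_add (a := b) hT
        have h₂ := Nat.div_mul_le_self a T
        rw [← show a / T = b / T from hab] at h₁
        omega
      exact hagood (mem_filter.2 ⟨haJ, b - a, mem_Icc.2 ⟨by omega, by omega⟩,
        by rw [Nat.add_sub_cancel' hlt.le]; exact (mem_sdiff.1 hb).1⟩)
  have hgood : ε * N / 2 ≤ #good := by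
    have hsplit : (#(J \ good) : ℝ) + #good = #J := by
      exact_mod_cast card_sdiff_add_card_eq_card (filter_subset _ J)
    have hTN' : (T : ℝ) ≤ N := by exact_mod_cast hTN
    have hNT : (N : ℝ) / T ≤ ε * N / 4 := by
      rw [div_le_iff₀ (by positivity)]
      nlinarith
    have hbad' : (#(J \ good) : ℝ) ≤ N / T + 1 := by
      have : ((N / T : ℕ) : ℝ) ≤ N / T := Nat.cast_div_le
      have := (Nat.cast_le (α := ℝ)).2 hbad
      push_cast at this
      linarith
    nlinarith
  have hcover : #good ≤ ∑ t ∈ Icc 1 T, #{j ∈ J | j + t ∈ J} := by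
    refine (card_le_card fun j hj => ?_).trans card_biUnion_le
    obtain ⟨hjJ, t, ht, htJ⟩ := mem_filter.1 hj
    exact mem_biUnion.2 ⟨t, ht, mem_filter.2 ⟨hjJ, htJ⟩⟩
  by_contra! h
  have hlt := sum_lt_sum_of_nonempty ⟨1, mem_Icc.2 ⟨le_rfl, hT⟩⟩ h
  rw [sum_const, Nat.card_Icc, nsmul_eq_mul, Nat.add_sub_cancel] at hlt
  have hT' : (T : ℝ) * (ε / (2 * T) * N) = ε * N / 2 := by field_simp
  have hcover' : (#good : ℝ) ≤ ∑ t ∈ Icc 1 T, (#{j ∈ J | j + t ∈ J} : ℝ) := by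
    exact_mod_cast hcover
  linarith

theorem eventually_exists_mul_pow_add_sum_ne_zero {𝕜 ι : Type*} [NormedField 𝕜] (s : Finset ι)
    {ε : ℝ} (hε : 0 < ε) :
    ∀ᶠ N : ℕ in atTop, ∀ (a r₀ : 𝕜) (c r : ι → 𝕜), a ≠ 0 → r₀ ≠ 0 →
      (∀ k ∈ s, c k ≠ 0 → ‖r k‖ < ‖r₀‖) → ∀ J ⊆ range N, ε * N ≤ #J →
      ∃ j ∈ J, a * r₀ ^ j + ∑ k ∈ s, c k * r k ^ j ≠ 0 := by
  classical
  induction s using Finset.induction_on generalizing ε with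
  | empty =>
    filter_upwards [eventually_ge_atTop 1] with N hN a r₀ c r ha hr₀ _ J _ hJε
    have hNε : (0 : ℝ) < #J := (mul_pos hε (by exact_mod_cast hN)).trans_le hJε
    obtain ⟨j, hj⟩ := card_pos.1 (by exact_mod_cast hNε)
    exact ⟨j, hj, by simp [ha, hr₀]⟩
  | insert k₁ s hk₁ ih =>
    set T := ⌈4 / ε⌉₊
    have hεT : 4 ≤ ε * T := (div_le_iff₀' hε).1 (Nat.le_ceil _)
    have hT : 0 < T := Nat.ceil_pos.2 (by positivity)
    filter_upwards [ih hε, ih (ε := ε / (2 * T)) (by positivity), eventually_ge_atTop T]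
      with N h₁ h₂ hTN a r₀ c r ha hr₀ hdom J hJ hJε
    simp only [sum_insert hk₁]
    by_cases hc : c k₁ = 0
    · simpa [hc] using h₁ a r₀ c r ha hr₀ (fun k hk => hdom k (mem_insert_of_mem hk)) J hJ hJε
    obtain ⟨t, ht, htJ⟩ := exists_dense_shift hεT hTN hJ hJε
    have hr₁ : ‖r k₁ ^ t‖ < ‖r₀ ^ t‖ := by
      rw [norm_pow, norm_pow]
      exact pow_lt_pow_left₀ (hdom _ (mem_insert_self _ _) hc) (norm_nonneg _)
        (by rw [mem_Icc] at ht; omega)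
    -- if `f j` is the sum above, `f (j + t) - r k₁ ^ t * f j` has the same shape without `k₁`
    obtain ⟨j, hj, hne⟩ := h₂ (a * (r₀ ^ t - r k₁ ^ t)) r₀ (fun k => c k * (r k ^ t - r k₁ ^ t)) r
      (mul_ne_zero ha (sub_ne_zero.2 fun h => hr₁.ne (by rw [h]))) hr₀
      (fun k hk hck => hdom k (mem_insert_of_mem hk) (left_ne_zero_of_mul hck)) _
      ((filter_subset _ _).trans hJ) htJ
    obtain ⟨hjJ, hjtJ⟩ := mem_filter.1 hj
    by_contra! hzero
    have hsum : ∑ k ∈ s, c k * (r k ^ t - r k₁ ^ t) * r k ^ j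
        = ∑ k ∈ s, c k * r k ^ (j + t) - r k₁ ^ t * ∑ k ∈ s, c k * r k ^ j := by
      rw [mul_sum, ← sum_sub_distrib]
      exact sum_congr rfl fun k _ => by ring
    apply hne
    rw [hsum]
    linear_combination hzero (j + t) hjtJ - r k₁ ^ t * hzero j hjJ

theorem eventually_exists_sum_pow_ne_zero {𝕜 κ : Type*} [NormedField 𝕜] [Fintype κ]
    {ε : ℝ} (hε : 0 < ε) :
    ∀ᶠ N : ℕ in atTop, ∀ (c r : κ → 𝕜) (k₀ : κ), c k₀ ≠ 0 → r k₀ ≠ 0 →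
      (∀ k ≠ k₀, c k ≠ 0 → ‖r k‖ < ‖r k₀‖) → ∀ J ⊆ range N, ε * N ≤ #J →
      ∃ j ∈ J, ∑ k, c k * r k ^ j ≠ 0 := by
  classical
  filter_upwards [eventually_exists_mul_pow_add_sum_ne_zero (𝕜 := 𝕜) (univ : Finset κ) hε]
    with N hN c r k₀ hc hr hdom J hJ hJε
  obtain ⟨j, hj, hne⟩ := hN (c k₀) (r k₀) (fun k => if k = k₀ then 0 else c k) r hc hr
    (fun k _ hk => by split_ifs at hk with h; exacts [absurd rfl hk, hdom k h hk]) J hJ hJε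
  refine ⟨j, hj, fun h => hne ?_⟩
  rw [← sum_erase univ (a := k₀) (by simp), sum_congr rfl fun k hk => by
    rw [if_neg (ne_of_mem_erase hk)], ← h, ← add_sum_erase _ _ (mem_univ k₀)]

section HeaviestBasis

variable {K V ι : Type*} [Field K] [AddCommGroup V] [Module K V] {v : ι → V}

theorem LinearIndepOn.finrank_span_image_eq_card {s : Finset ι} (hs : LinearIndepOn K v ↑s) :
    finrank K (span K (v '' s)) = #s := by
  rw [Set.image_eq_range]
  simpa using finrank_span_eq_card hs

theorem LinearIndepOn.exists_insert_of_card_lt [DecidableEq ι] {I J : Finset ι}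
    (hI : LinearIndepOn K v ↑I) (hJ : LinearIndepOn K v ↑J) (hIJ : #I < #J) :
    ∃ e ∈ J, e ∉ I ∧ LinearIndepOn K v ↑(insert e I) := by
  by_contra! h
  have hle : span K (v '' J) ≤ span K (v '' I) := by
    rw [span_le]
    rintro _ ⟨e, he, rfl⟩
    by_cases heI : e ∈ I
    · exact subset_span (Set.mem_image_of_mem v heI)
    · by_contra hv
      exact h e he heI (by rw [coe_insert]; exact hI.insert hv)
  have : FiniteDimensional K (span K (v '' I)) :=
    FiniteDimensional.span_of_finite K (I.finite_toSet.image v)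
  have := finrank_mono hle
  rw [hI.finrank_span_image_eq_card, hJ.finrank_span_image_eq_card] at this
  omega

theorem exists_linearIndepOn_card_eq_finrank [Fintype ι] (hv : span K (Set.range v) = ⊤) :
    ∃ S : Finset ι, LinearIndepOn K v ↑S ∧ #S = finrank K V := by
  classical
  obtain ⟨b, -, -, hspan, hb⟩ :=
    exists_linearIndepOn_extension (linearIndepOn_empty K v) (Set.empty_subset Set.univ)
  refine ⟨b.toFinset, by simpa using hb, ?_⟩
  have htop : span K (v '' b) = ⊤ := by
    rw [eq_top_iff, ← hv, ← Set.image_univ, span_le]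
    exact hspan
  rw [← (by simpa using hb : LinearIndepOn K v ↑b.toFinset).finrank_span_image_eq_card,
    Set.coe_toFinset, htop, finrank_top]

variable {w : ι → ℝ}

theorem LinearIndepOn.exists_prod_lt_of_exchange [DecidableEq ι] (hw₀ : ∀ i, 0 < w i)
    {S₁ S₂ : Finset ι} (h₁ : LinearIndepOn K v ↑S₁) (h₂ : LinearIndepOn K v ↑S₂)
    (hcard : #S₁ = #S₂) {a : ι} (ha₁ : a ∈ S₁) (ha₂ : a ∉ S₂)
    (hw : ∀ b ∈ S₂, b ∉ S₁ → w a < w b) :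
    ∃ S : Finset ι, LinearIndepOn K v ↑S ∧ #S = #S₁ ∧ ∏ i ∈ S₁, w i < ∏ i ∈ S, w i := by
  have hcard' : #(S₁.erase a) < #S₂ := by
    rw [card_erase_of_mem ha₁]; have := card_pos.2 ⟨a, ha₁⟩; omega
  obtain ⟨b, hb₂, hb, hind⟩ :=
    (h₁.mono (coe_subset.2 (erase_subset a S₁))).exists_insert_of_card_lt h₂ hcard'
  have hb₁ : b ∉ S₁ := fun h => hb (mem_erase.2 ⟨fun hba => ha₂ (hba ▸ hb₂), h⟩)
  refine ⟨insert b (S₁.erase a), hind, ?_, ?_⟩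
  · rw [card_insert_of_notMem hb, card_erase_of_mem ha₁]
    have := card_pos.2 ⟨a, ha₁⟩; omega
  · rw [prod_insert hb, ← mul_prod_erase S₁ w ha₁]
    exact mul_lt_mul_of_pos_right (hw b hb₂ hb₁) (prod_pos fun i _ => hw₀ i)

open scoped symmDiff in
theorem exists_forall_prod_lt_of_linearIndepOn [Fintype ι] (hv : span K (Set.range v) = ⊤)
    (hw₀ : ∀ i, 0 < w i) (hw : Injective w) :
    ∃ S₀ : Finset ι, LinearIndepOn K v ↑S₀ ∧ #S₀ = finrank K V ∧
      ∀ S : Finset ι, LinearIndepOn K v ↑S → #S = finrank K V → S ≠ S₀ →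
        ∏ i ∈ S, w i < ∏ i ∈ S₀, w i := by
  classical
  obtain ⟨S₁, hS₁⟩ := exists_linearIndepOn_card_eq_finrank hv
  obtain ⟨S₀, hS₀, hmax⟩ := exists_max_image
    {S : Finset ι | LinearIndepOn K v ↑S ∧ #S = finrank K V} (fun S => ∏ i ∈ S, w i)
    ⟨S₁, mem_filter.2 ⟨mem_univ _, hS₁⟩⟩
  obtain ⟨-, hS₀, hcard₀⟩ := mem_filter.1 hS₀
  refine ⟨S₀, hS₀, hcard₀, fun S hS hcard hne => lt_of_not_ge fun hle => ?_⟩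
  have hmax' : ∀ T : Finset ι, LinearIndepOn K v ↑T → #T = finrank K V →
      ∏ i ∈ T, w i ≤ ∏ i ∈ S₀, w i := fun T hT hcT => hmax T (mem_filter.2 ⟨mem_univ _, hT, hcT⟩)
  -- exchange the lightest element of the symmetric difference for a heavier one
  obtain ⟨a, ha, hmin⟩ := exists_min_image (S ∆ S₀) w (symmDiff_nonempty.2 hne)
  have hlt : ∀ b ∈ S ∆ S₀, b ≠ a → w a < w b :=
    fun b hb hba => (hmin b hb).lt_of_ne (hw.ne hba.symm)
  rcases mem_symmDiff.1 ha with ⟨haS, haS₀⟩ | ⟨haS₀, haS⟩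
  · obtain ⟨T, hT, hcT, hlt'⟩ := hS.exists_prod_lt_of_exchange hw₀ hS₀
      (hcard.trans hcard₀.symm) haS haS₀ fun b hb₀ hb => hlt b (mem_symmDiff.2 (.inr ⟨hb₀, hb⟩))
        fun h => hb (h ▸ haS)
    linarith [hmax' T hT (hcT.trans hcard)]
  · obtain ⟨T, hT, hcT, hlt'⟩ := hS₀.exists_prod_lt_of_exchange hw₀ hS
      (hcard₀.trans hcard.symm) haS₀ haS fun b hb hb₀ => hlt b (mem_symmDiff.2 (.inl ⟨hb, hb₀⟩))
        fun h => hb₀ (h ▸ haS₀)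
    linarith [hmax' T hT (hcT.trans hcard₀)]

end HeaviestBasis

theorem Matrix.det_add_diagonal_mul {ι R : Type*} [Fintype ι] [DecidableEq ι] [CommRing R]
    (M N : Matrix ι ι R) (s : ι → R) :
    (N + diagonal s * M).det =
      ∑ S : Finset ι, det (of fun i => if i ∈ S then M i else N i) * ∏ i ∈ S, s i := by
  have hrows : N + diagonal s * M = of fun i => s i • M i + N i := by
    ext i j; simp [diagonal_mul, add_comm]
  rw [hrows]
  change detRowAlternating ((fun i => s i • M i) + fun i => N i) = _
  rw [AlternatingMap.map_add_univ]
  refine sum_congr rfl fun S _ => ?_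
  have : S.piecewise (fun i => s i • M i) N =
      S.piecewise (fun i => s i • S.piecewise M N i) (S.piecewise M N) := by
    ext i : 1
    by_cases hi : i ∈ S <;> simp [Finset.piecewise, hi]
  rw [this, ← AlternatingMap.coe_multilinearMap, MultilinearMap.map_piecewise_smul, smul_eq_mul,
    mul_comm]
  rfl

section Coordinates

variable {K V ι : Type*} [Field K] [AddCommGroup V] [Module K V] (θ : Basis ι K V)

theorem Module.Basis.mem_span_image_finset_iff {x : V} {T : Finset ι} :
    x ∈ span K (θ '' ↑T) ↔ ∀ i ∉ T, θ.repr x i = 0 := by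
  rw [θ.mem_span_image]
  simp [Set.subset_def, not_imp_comm]

variable [Fintype ι] [DecidableEq ι]

theorem det_toMatrix_ite_eq_zero_iff (P Q : V →ₗ[K] V) (S : Finset ι) :
    det (of fun i => if i ∈ S then LinearMap.toMatrix θ θ Q i else LinearMap.toMatrix θ θ P i) = 0 ↔
      ∃ v ≠ 0, Q v ∈ span K (θ '' ↑Sᶜ) ∧ P v ∈ span K (θ '' ↑S) := by
  have hrow : ∀ v i, ((of fun i => if i ∈ S then LinearMap.toMatrix θ θ Q i
      else LinearMap.toMatrix θ θ P i) *ᵥ θ.repr v) i =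
        if i ∈ S then θ.repr (Q v) i else θ.repr (P v) i := by
    intro v i
    rw [← LinearMap.toMatrix_mulVec_repr θ θ Q, ← LinearMap.toMatrix_mulVec_repr θ θ P]
    by_cases hi : i ∈ S <;> simp [Matrix.mulVec, hi]
  rw [← Matrix.exists_mulVec_eq_zero_iff, θ.equivFun.surjective.exists]
  refine exists_congr fun v => ?_
  rw [LinearEquiv.map_ne_zero_iff, Basis.equivFun_apply, funext_iff]
  simp only [hrow, Pi.zero_apply, θ.mem_span_image_finset_iff, mem_compl, not_not]
  exact and_congr_right fun _ => ⟨fun h => ⟨fun i hi => by simpa [hi] using h i,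
    fun i hi => by simpa [hi] using h i⟩,
      fun h i => by split_ifs with hi; exacts [h.1 i hi, h.2 i hi]⟩

theorem card_eq_finrank_of_disjoint {E W : Submodule K V} {S : Finset ι}
    (hE : Disjoint E (span K (θ '' ↑S))) (hW : Disjoint W (span K (θ '' ↑Sᶜ)))
    (hEW : finrank K E + finrank K W = Fintype.card ι) : #S = finrank K W := by
  have : FiniteDimensional K V := .of_basis θ
  have hspan (T : Finset ι) : finrank K (span K (θ '' ↑T)) = #T :=
    (θ.linearIndependent.linearIndepOn _).finrank_span_image_eq_card
  have h₁ := finrank_add_finrank_le_of_disjoint hE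
  have h₂ := finrank_add_finrank_le_of_disjoint hW
  rw [hspan, finrank_eq_card_basis θ] at h₁ h₂
  rw [card_compl] at h₂
  have := card_le_univ S
  omega

end Coordinates

theorem Submodule.linearIndepOn_mkQ_comp_iff {K V ι : Type*} [Field K] [AddCommGroup V]
    [Module K V] {v : ι → V} {s : Set ι} (p : Submodule K V) (hv : LinearIndepOn K v s) :
    LinearIndepOn K (p.mkQ ∘ v) s ↔ Disjoint p (span K (v '' s)) := by
  rw [disjoint_comm]
  refine ⟨fun h => ?_, fun h => (p.mkQ.linearIndepOn_iff_of_injOn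
    (LinearMap.injOn_of_disjoint_ker le_rfl (by rwa [ker_mkQ]))).2 hv⟩
  simpa [← Set.image_eq_range] using Submodule.range_ker_disjoint (v := fun i : s => v i) h

section Splitting

variable {K V ι : Type*} [Field K] [AddCommGroup V] [Module K V] {E W : Submodule K V}

namespace LinearEquiv

/- `φ.fstEnd + f ∘ₗ φ.sndEnd` sends `v` to `x + f y`, where `φ v = (x, y)`: it stands for the
matrix whose columns are a basis of `E` followed by the image under `f` of a basis of `W`. -/
def fstEnd (φ : V ≃ₗ[K] E × W) : Module.End K V :=
  E.subtype ∘ₗ LinearMap.fst K E W ∘ₗ φ.toLinearMap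

def sndEnd (φ : V ≃ₗ[K] E × W) : Module.End K V :=
  W.subtype ∘ₗ LinearMap.snd K E W ∘ₗ φ.toLinearMap

variable (φ : V ≃ₗ[K] E × W)

theorem det_fstEnd_add_comp_sndEnd_eq_zero [FiniteDimensional K V] {f : Module.End K V}
    (h : E ⊓ W.map f ≠ ⊥) : LinearMap.det (φ.fstEnd + f ∘ₗ φ.sndEnd) = 0 := by
  obtain ⟨_, hx, hx0⟩ := (Submodule.ne_bot_iff _).1 h
  obtain ⟨hxE, y, hyW, rfl⟩ := mem_inf.1 hx
  rw [LinearMap.det_eq_zero_iff_ker_ne_bot, Submodule.ne_bot_iff]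
  refine ⟨φ.symm (⟨f y, hxE⟩, -⟨y, hyW⟩), ?_, ?_⟩
  · simp [fstEnd, sndEnd]
  · simp [hx0]

variable [Fintype ι] [DecidableEq ι] (θ : Basis ι K V)

noncomputable def mixedMinor (S : Finset ι) : K :=
  det (of fun i => if i ∈ S then LinearMap.toMatrix θ θ φ.sndEnd i
    else LinearMap.toMatrix θ θ φ.fstEnd i)

theorem mixedMinor_ne_zero_iff (S : Finset ι) :
    φ.mixedMinor θ S ≠ 0 ↔ Disjoint E (span K (θ '' ↑S)) ∧ Disjoint W (span K (θ '' ↑Sᶜ)) := by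
  rw [mixedMinor, ne_eq, det_toMatrix_ite_eq_zero_iff]
  constructor
  · intro h
    refine ⟨disjoint_def.2 fun x hxE hxS => ?_, disjoint_def.2 fun y hyW hyS => ?_⟩
    · by_contra hx
      exact h ⟨φ.symm (⟨x, hxE⟩, 0), by simpa using hx, by simp [sndEnd],
        by simpa [fstEnd] using hxS⟩
    · by_contra hy
      exact h ⟨φ.symm (0, ⟨y, hyW⟩), by simpa using hy, by simpa [sndEnd] using hyS,
        by simp [fstEnd]⟩
  · rintro ⟨hE, hW⟩ ⟨v, hv, hQ, hP⟩
    have h₁ := disjoint_def.1 hE _ (φ v).1.2 hP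
    have h₂ := disjoint_def.1 hW _ (φ v).2.2 hQ
    exact hv (φ.map_eq_zero_iff.1 (Prod.ext (Subtype.ext h₁) (Subtype.ext h₂)))

theorem mixedMinor_ne_zero_iff_linearIndepOn
    (hW : ∀ T : Finset ι, #T = finrank K E → Disjoint W (span K (θ '' ↑T))) (S : Finset ι) :
    φ.mixedMinor θ S ≠ 0 ↔ LinearIndepOn K (E.mkQ ∘ θ) ↑S ∧ #S = finrank K (V ⧸ E) := by
  have : FiniteDimensional K V := .of_basis θ
  have hEW : finrank K E + finrank K W = Fintype.card ι := by
    rw [← finrank_eq_card_basis θ, φ.finrank_eq, finrank_prod]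
  have hquot : finrank K (V ⧸ E) = finrank K W := by
    have := E.finrank_quotient_add_finrank
    rw [finrank_eq_card_basis θ] at this
    omega
  rw [mixedMinor_ne_zero_iff, E.linearIndepOn_mkQ_comp_iff (θ.linearIndependent.linearIndepOn _),
    hquot]
  constructor
  · rintro ⟨hE, hW'⟩
    exact ⟨hE, card_eq_finrank_of_disjoint θ hE hW' hEW⟩
  · rintro ⟨hE, hS⟩
    refine ⟨hE, hW _ ?_⟩
    rw [card_compl]
    omega

theorem exists_forall_prod_lt_of_mixedMinor_ne_zero
    (hW : ∀ T : Finset ι, #T = finrank K E → Disjoint W (span K (θ '' ↑T)))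
    {w : ι → ℝ} (hw₀ : ∀ i, 0 < w i) (hw : Injective w) :
    ∃ S₀ : Finset ι, φ.mixedMinor θ S₀ ≠ 0 ∧
      ∀ S, φ.mixedMinor θ S ≠ 0 → S ≠ S₀ → ∏ i ∈ S, w i < ∏ i ∈ S₀, w i := by
  have hspan : span K (Set.range (E.mkQ ∘ θ)) = ⊤ := by
    rw [Set.range_comp, span_image, θ.span_eq, Submodule.map_top, range_mkQ]
  obtain ⟨S₀, hS₀, hcard₀, hlt⟩ := exists_forall_prod_lt_of_linearIndepOn hspan hw₀ hw
  simp_rw [φ.mixedMinor_ne_zero_iff_linearIndepOn θ hW]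
  exact ⟨S₀, ⟨hS₀, hcard₀⟩, fun S hS => hlt S hS.1 hS.2⟩

theorem det_fstEnd_add_comp_sndEnd {f : Module.End K V} {μ : ι → K}
    (hf : ∀ i, f (θ i) = μ i • θ i) :
    LinearMap.det (φ.fstEnd + f ∘ₗ φ.sndEnd) = ∑ S, φ.mixedMinor θ S * ∏ i ∈ S, μ i := by
  have hdiag : LinearMap.toMatrix θ θ f = diagonal μ := by
    ext i j
    rw [LinearMap.toMatrix_apply, hf, map_smul, θ.repr_self, diagonal_apply]
    by_cases h : i = j <;> simp [h]
  rw [← LinearMap.det_toMatrix θ, map_add, LinearMap.toMatrix_comp θ θ θ, hdiag,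
    det_add_diagonal_mul]
  rfl

end LinearEquiv

end Splitting

theorem stmt0_general (d ℓ : ℕ)
    (ε : ℝ) (hε : 0 < ε) :
    ∃ N : ℕ, 1 ≤ N ∧
      ∀ (B : (Fin d → ℂ) ≃ₗ[ℂ] (Fin d → ℂ)) (θ : Module.Basis (Fin d) ℂ (Fin d → ℂ))
        (μ : Fin d → ℂ),
        (∀ i, B (θ i) = μ i • θ i) →
        (∀ i j, i ≠ j → ‖μ i‖ ≠ ‖μ j‖) →
        ∀ W : Submodule ℂ (Fin d → ℂ), Module.finrank ℂ W = d - ℓ →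
        (∀ S : Finset (Fin d), S.card = ℓ →
          W ⊓ Submodule.span ℂ (⇑θ '' (S : Set (Fin d))) = ⊥) →
        ∀ J : Finset ℕ, J ⊆ Finset.range N → ε * N ≤ (J.card : ℝ) →
        ¬ ∃ E : Submodule ℂ (Fin d → ℂ), Module.finrank ℂ E = ℓ ∧
          ∀ j ∈ J, E ⊓ W.map ((B ^ j).toLinearMap) ≠ ⊥ := by
  obtain ⟨N, hsum, hN⟩ := ((eventually_exists_sum_pow_ne_zero (𝕜 := ℂ)
    (κ := Finset (Fin d)) hε).and (eventually_ge_atTop 1)).exists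
  refine ⟨N, hN, fun B θ μ hBθ hμ W hW hWθ J hJ hJε ⟨E, hE, hEJ⟩ => ?_⟩
  have hμ₀ (i : Fin d) : μ i ≠ 0 := fun h =>
    θ.ne_zero i (B.map_eq_zero_iff.1 (by rw [hBθ, h, zero_smul]))
  have hBj (j : ℕ) (i : Fin d) : (B ^ j).toLinearMap (θ i) = μ i ^ j • θ i := by
    induction j with
    | zero => simp
    | succ j ih =>
      rw [LinearEquiv.coe_toLinearMap] at *
      rw [pow_succ', LinearEquiv.mul_apply, ih, map_smul, hBθ, smul_smul, pow_succ]
  have hℓ : ℓ ≤ d := hE ▸ (Submodule.finrank_le E).trans (by simp)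
  let φ : (Fin d → ℂ) ≃ₗ[ℂ] E × W :=
    LinearEquiv.ofFinrankEq _ _ (by simp [finrank_prod, hE, hW]; omega)
  obtain ⟨S₀, hS₀, hdom⟩ := φ.exists_forall_prod_lt_of_mixedMinor_ne_zero θ
    (fun T hT => disjoint_iff.2 (hWθ T (hT.trans hE))) (w := fun i => ‖μ i‖)
    (fun i => norm_pos_iff.2 (hμ₀ i)) (fun i k h => by_contra fun hik => hμ i k hik h)
  obtain ⟨j, hj, hne⟩ := hsum (φ.mixedMinor θ) (fun S => ∏ i ∈ S, μ i) S₀ hS₀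
    (prod_ne_zero_iff.2 fun i _ => hμ₀ i)
    (fun S hS hc => by simpa only [norm_prod] using hdom S hc hS) J hJ hJε
  apply hne
  simp_rw [← prod_pow, ← φ.det_fstEnd_add_comp_sndEnd θ (hBj j)]
  exact φ.det_fstEnd_add_comp_sndEnd_eq_zero (hEJ j hj)

/-- **Proposition 5.4.** For every `ε > 0` there is `N ≥ 1` such that for every linear
automorphism `B` of `ℂ^d` with a basis of eigenvectors whose eigenvalues have pairwise
distinct absolute values, every `(d-ℓ)`-dimensional subspace `W` meeting every sum of `ℓ`
eigenspaces trivially, and every `ε`-dense subset `J ⊆ {0,…,N-1}`, there is no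
`ℓ`-dimensional subspace `E` with `E ∩ B^j(W) ≠ {0}` for all `j ∈ J`. -/
theorem stmt0 (d ℓ : ℕ) (hd : 2 ≤ d) (hℓ1 : 1 ≤ ℓ) (hℓd : ℓ ≤ d - 1)
    (ε : ℝ) (hε : 0 < ε) :
    ∃ N : ℕ, 1 ≤ N ∧
      ∀ (B : (Fin d → ℂ) ≃ₗ[ℂ] (Fin d → ℂ)) (θ : Module.Basis (Fin d) ℂ (Fin d → ℂ))
        (μ : Fin d → ℂ),
        (∀ i, B (θ i) = μ i • θ i) →
        (∀ i j, i ≠ j → ‖μ i‖ ≠ ‖μ j‖) →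
        ∀ W : Submodule ℂ (Fin d → ℂ), Module.finrank ℂ W = d - ℓ →
        (∀ S : Finset (Fin d), S.card = ℓ →
          W ⊓ Submodule.span ℂ (⇑θ '' (S : Set (Fin d))) = ⊥) →
        ∀ J : Finset ℕ, J ⊆ Finset.range N → ε * N ≤ (J.card : ℝ) →
        ¬ ∃ E : Submodule ℂ (Fin d → ℂ), Module.finrank ℂ E = ℓ ∧
          ∀ j ∈ J, E ⊓ W.map ((B ^ j).toLinearMap) ≠ ⊥ :=
  stmt0_general d ℓ ε hε
end

section
/- Let d ≥ 1, let B be a linear automorphism of ℂ^d, let H ⊆ ℂ^d be a linear subspace of dimension d−1, and let 1 ≤ k ≤ d. Let I ⊆ ℕ be a k-cube, and for a finite set I′ ⊆ ℕ write H(I′) = ⋂_{i∈I′} B^i(H). If H(I) has codimension at most k in ℂ^d (i.e. dim H(I) ≥ d−k), then there exist a subcube I′ of I and an integer l ≥ 1 such that B^l(H(I′)) = H(I′). -/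
/-- The `k`-cube based at `c` with sides `cs i`, as a finite subset of `ℕ`:
`{c + ∑_{i ∈ S} cs i : S ⊆ ι}`. -/
def cubeOn (c : ℕ) {ι : Type} [Fintype ι] [DecidableEq ι] (cs : ι → ℕ) : Finset ℕ :=
  Finset.image (fun S : Finset ι => c + ∑ i ∈ S, cs i) Finset.univ

/-- `H(I) = ⋂_{i ∈ I} B^i(H)`. -/
noncomputable def interIter {d : ℕ} (B : (Fin d → ℂ) ≃ₗ[ℂ] (Fin d → ℂ))
    (H : Submodule ℂ (Fin d → ℂ)) (I : Finset ℕ) : Submodule ℂ (Fin d → ℂ) :=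
  ⨅ i ∈ I, Submodule.map ((B ^ i).toLinearMap) H

lemma cubeOn_shift {ι : Type} [Fintype ι] [DecidableEq ι] (c m : ℕ) (cs : ι → ℕ) :
    cubeOn (c + m) cs = Finset.image (m + ·) (cubeOn c cs) := by
  unfold cubeOn
  rw [Finset.image_image]
  congr 1
  funext S
  simp only [Function.comp_apply]
  omega

lemma cubeOn_reindex {ι κ : Type} [Fintype ι] [DecidableEq ι] [Fintype κ] [DecidableEq κ]
    (e : κ ≃ ι) (c : ℕ) (cs : ι → ℕ) :
    cubeOn c (fun i => cs (e i)) = cubeOn c cs := by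
  unfold cubeOn
  have hsurj : Function.Surjective (fun S : Finset κ => S.map e.toEmbedding) := by
    intro S
    refine ⟨S.map e.symm.toEmbedding, ?_⟩
    simp only [Finset.map_map]
    ext x
    simp
  conv_rhs => rw [← Finset.image_univ_of_surjective hsurj]
  rw [Finset.image_image]
  congr 1
  funext S
  simp [Finset.sum_map]

noncomputable def embEquiv {α β : Type} (f : α ↪ β) (s : Finset α) : {x // x ∈ s} ≃ {y // y ∈ s.map f} where
  toFun x := ⟨f x.1, Finset.mem_map_of_mem f x.2⟩
  invFun y := ⟨(Finset.mem_map.mp y.2).choose, (Finset.mem_map.mp y.2).choose_spec.1⟩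
  left_inv x := by
    have h := (Finset.mem_map.mp (Finset.mem_map_of_mem f x.2)).choose_spec
    exact Subtype.ext (f.injective h.2)
  right_inv y := by
    have h := (Finset.mem_map.mp y.2).choose_spec
    exact Subtype.ext h.2

lemma cubeOn_split {ι : Type} [Fintype ι] [DecidableEq ι] (c : ℕ) (cs : ι → ℕ) (i₀ : ι) :
    cubeOn c cs = cubeOn c (fun i : {x : ι // x ≠ i₀} => cs i)
      ∪ cubeOn (c + cs i₀) (fun i : {x : ι // x ≠ i₀} => cs i) := by
  classical
  have hsum : ∀ (t : Finset ι), i₀ ∉ t →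
      ∑ i ∈ t.subtype (· ≠ i₀), cs i.val = ∑ i ∈ t, cs i := by
    intro t ht
    have h1 : (t.subtype (· ≠ i₀)).map (Function.Embedding.subtype _) = t := by
      rw [Finset.subtype_map, Finset.filter_true_of_mem]
      intro x hx hx'
      exact ht (hx' ▸ hx)
    conv_rhs => rw [← h1]
    rw [Finset.sum_map]
    rfl
  ext x
  simp only [cubeOn, Finset.mem_union, Finset.mem_image, Finset.mem_univ, true_and]
  constructor
  · rintro ⟨S, rfl⟩
    by_cases h : i₀ ∈ S
    · right
      refine ⟨(S.erase i₀).subtype (· ≠ i₀), ?_⟩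
      rw [hsum _ (Finset.notMem_erase i₀ S)]
      have := Finset.add_sum_erase S cs h
      omega
    · left
      exact ⟨S.subtype (· ≠ i₀), by rw [hsum _ h]⟩
  · rintro (⟨S', rfl⟩ | ⟨S', rfl⟩)
    · refine ⟨S'.map (Function.Embedding.subtype _), ?_⟩
      rw [Finset.sum_map]
      rfl
    · have hni : i₀ ∉ S'.map (Function.Embedding.subtype _) := by
        simp only [Finset.mem_map, Function.Embedding.coe_subtype]
        rintro ⟨a, _, ha⟩
        exact a.2 ha
      refine ⟨insert i₀ (S'.map (Function.Embedding.subtype _)), ?_⟩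
      rw [Finset.sum_insert hni, Finset.sum_map]
      have : ∑ a ∈ S', cs ((Function.Embedding.subtype fun x => x ≠ i₀) a)
          = ∑ i ∈ S', cs i.val := rfl
      omega

lemma cubeOn_inst {ι : Type} [DecidableEq ι] (h1 h2 : Fintype ι) (c : ℕ) (cs : ι → ℕ) :
    @cubeOn c ι h1 _ cs = @cubeOn c ι h2 _ cs := by
  cases Subsingleton.elim h1 h2; rfl

variable {d : ℕ} (B : (Fin d → ℂ) ≃ₗ[ℂ] (Fin d → ℂ)) (H : Submodule ℂ (Fin d → ℂ))

lemma interIter_union (I J : Finset ℕ) :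
    interIter B H (I ∪ J) = interIter B H I ⊓ interIter B H J := by
  simp only [interIter]
  exact Finset.iInf_union

lemma map_equiv_iInf (e : (Fin d → ℂ) ≃ₗ[ℂ] (Fin d → ℂ)) {α : Sort*}
    (p : α → Submodule ℂ (Fin d → ℂ)) :
    Submodule.map e.toLinearMap (⨅ i, p i) = ⨅ i, Submodule.map e.toLinearMap (p i) := by
  have hcoe : ∀ q : Submodule ℂ (Fin d → ℂ),
      Submodule.map e.toLinearMap q = Submodule.orderIsoMapComap e q := fun q => rfl
  simp_rw [hcoe]
  exact (Submodule.orderIsoMapComap e).map_iInf p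

lemma map_pow_add (m j : ℕ) :
    Submodule.map ((B ^ (m + j)).toLinearMap) H
      = Submodule.map ((B ^ m).toLinearMap) (Submodule.map ((B ^ j).toLinearMap) H) := by
  rw [← Submodule.map_comp]
  congr 1
  ext x
  simp [pow_add]

lemma interIter_shift (m : ℕ) (I : Finset ℕ) :
    interIter B H (Finset.image (m + ·) I)
      = Submodule.map ((B ^ m).toLinearMap) (interIter B H I) := by
  have h1 : interIter B H (Finset.image (m + ·) I)
      = ⨅ j ∈ I, Submodule.map ((B ^ (m + j)).toLinearMap) H := by
    unfold interIter
    apply le_antisymm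
    · exact le_iInf fun j => le_iInf fun hj =>
        iInf_le_of_le (m + j) (iInf_le _ (Finset.mem_image_of_mem _ hj))
    · refine le_iInf fun i => le_iInf fun hi => ?_
      obtain ⟨j, hj, rfl⟩ := Finset.mem_image.mp hi
      exact iInf_le_of_le j (iInf_le _ hj)
  rw [h1]
  unfold interIter
  simp_rw [map_equiv_iInf, map_pow_add B H m]

theorem aux (d : ℕ) (hd : 1 ≤ d) (B : (Fin d → ℂ) ≃ₗ[ℂ] (Fin d → ℂ))
    (H : Submodule ℂ (Fin d → ℂ)) (hH : Module.finrank ℂ H = d - 1) :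
    ∀ (k : ℕ) (ι : Type) [Fintype ι] [DecidableEq ι], Fintype.card ι = k →
    ∀ (c : ℕ) (cs : ι → ℕ), (∀ i, 1 ≤ cs i) →
    d - k ≤ Module.finrank ℂ (interIter B H (cubeOn c cs)) →
    ∃ T U : Finset ι, Disjoint T U ∧ ∃ l : ℕ, 1 ≤ l ∧
      Submodule.map ((B ^ l).toLinearMap)
          (interIter B H (cubeOn (c + ∑ i ∈ U, cs i) (fun i : {x // x ∈ T} => cs i)))
        = interIter B H (cubeOn (c + ∑ i ∈ U, cs i) (fun i : {x // x ∈ T} => cs i)) := by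
  intro k
  induction k with
  | zero =>
    intro ι _ _ hcard c cs hcs hdim
    exfalso
    have hempty : IsEmpty ι := Fintype.card_eq_zero_iff.mp hcard
    have hcube : cubeOn c cs = {c} := by
      have hS : ∀ S : Finset ι, c + ∑ i ∈ S, cs i = c := by
        intro S
        rw [Finset.eq_empty_of_isEmpty S]
        simp
      ext x
      simp only [cubeOn, Finset.mem_image, Finset.mem_univ, true_and, Finset.mem_singleton]
      constructor
      · rintro ⟨S, rfl⟩; exact hS S
      · rintro rfl; exact ⟨∅, by simp⟩
    rw [hcube] at hdim
    have h2 : interIter B H {c} = Submodule.map ((B ^ c).toLinearMap) H := by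
      simp [interIter]
    rw [h2, LinearEquiv.finrank_map_eq, hH] at hdim
    omega
  | succ k IH =>
    intro ι _ _ hcard c cs hcs hdim
    obtain ⟨i₀⟩ : Nonempty ι := Fintype.card_pos_iff.mp (by omega)
    have hcard' : Fintype.card {x : ι // x ≠ i₀} = k := by
      have h1 : Fintype.card {x : ι // x ≠ i₀} = Fintype.card ι - Fintype.card {x : ι // x = i₀} :=
        Fintype.card_subtype_compl _
      have h2 : Fintype.card {x : ι // x = i₀} = 1 := Fintype.card_subtype_eq i₀
      simp only [h2] at h1
      omega
    set cs' : {x : ι // x ≠ i₀} → ℕ := fun i => cs i.val with hcs'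
    set A := interIter B H (cubeOn c cs') with hA
    have hsplit : interIter B H (cubeOn c cs)
        = A ⊓ Submodule.map ((B ^ cs i₀).toLinearMap) A := by
      rw [cubeOn_split c cs i₀, interIter_union, hA]
      congr 1
      rw [cubeOn_shift, interIter_shift]
    -- lifting results from the subtype to ι
    have lift : ∀ (T' U' : Finset {x : ι // x ≠ i₀}), Disjoint T' U' → ∀ l : ℕ, 1 ≤ l →
        Submodule.map ((B ^ l).toLinearMap)
            (interIter B H (cubeOn (c + ∑ i ∈ U', cs' i) (fun i : {x // x ∈ T'} => cs' i)))
          = interIter B H (cubeOn (c + ∑ i ∈ U', cs' i) (fun i : {x // x ∈ T'} => cs' i)) →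
        ∃ T U : Finset ι, Disjoint T U ∧ ∃ l : ℕ, 1 ≤ l ∧
          Submodule.map ((B ^ l).toLinearMap)
              (interIter B H (cubeOn (c + ∑ i ∈ U, cs i) (fun i : {x // x ∈ T} => cs i)))
            = interIter B H (cubeOn (c + ∑ i ∈ U, cs i) (fun i : {x // x ∈ T} => cs i)) := by
      intro T' U' hdisj l hl heq
      set emb : {x : ι // x ≠ i₀} ↪ ι := Function.Embedding.subtype _ with hemb
      refine ⟨T'.map emb, U'.map emb, (Finset.disjoint_map emb).mpr hdisj, l, hl, ?_⟩
      have hbase : ∑ i ∈ U'.map emb, cs i = ∑ i ∈ U', cs' i := by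
        rw [Finset.sum_map]; rfl
      have hcube : cubeOn (c + ∑ i ∈ U'.map emb, cs i) (fun i : {x // x ∈ T'.map emb} => cs i)
          = cubeOn (c + ∑ i ∈ U', cs' i) (fun i : {x // x ∈ T'} => cs' i) := by
        rw [hbase]
        exact (@cubeOn_reindex {y // y ∈ T'.map emb} {x // x ∈ T'} (Finset.Subtype.fintype _) _
          (Finset.Subtype.fintype _) _ (embEquiv emb T') (c + ∑ i ∈ U', cs' i)
          (fun y : {y // y ∈ T'.map emb} => cs y.val)).symm
      rw [hcube]
      exact heq
    by_cases hfix : Submodule.map ((B ^ cs i₀).toLinearMap) A = A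
    · apply lift Finset.univ ∅ (Finset.disjoint_empty_right _) (cs i₀) (hcs i₀)
      have hcube : cubeOn (c + ∑ i ∈ (∅ : Finset {x : ι // x ≠ i₀}), cs' i)
            (fun i : {x // x ∈ (Finset.univ : Finset {x : ι // x ≠ i₀})} => cs' i)
          = cubeOn c cs' := by
        rw [show c + ∑ i ∈ (∅ : Finset {x : ι // x ≠ i₀}), cs' i = c by simp]
        rw [cubeOn_inst _ (Subtype.fintype _)]
        exact cubeOn_reindex (Equiv.subtypeUnivEquiv (fun x => Finset.mem_univ x)) c cs'
      rw [hcube]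
      exact hfix
    · have hAdim : d - k ≤ Module.finrank ℂ A := by
        have h1 : Module.finrank ℂ (interIter B H (cubeOn c cs)) ≤ Module.finrank ℂ A := by
          rw [hsplit]
          exact Submodule.finrank_mono inf_le_left
        have h2 : Module.finrank ℂ (interIter B H (cubeOn c cs)) ≠ Module.finrank ℂ A := by
          intro h
          apply hfix
          have hle : A ⊓ Submodule.map ((B ^ cs i₀).toLinearMap) A ≤ A := inf_le_left
          have heqA : A ⊓ Submodule.map ((B ^ cs i₀).toLinearMap) A = A :=
            Submodule.eq_of_le_of_finrank_le hle (by rw [← h, hsplit])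
          have hle2 : A ≤ Submodule.map ((B ^ cs i₀).toLinearMap) A := by
            conv_lhs => rw [← heqA]
            exact inf_le_right
          exact (Submodule.eq_of_le_of_finrank_le hle2
            (by rw [LinearEquiv.finrank_map_eq])).symm
        omega
      obtain ⟨T', U', hdisj, l, hl, heq⟩ :=
        IH {x : ι // x ≠ i₀} hcard' c cs' (fun i => hcs i.val) hAdim
      exact lift T' U' hdisj l hl heq


/-- **Lemma 5.6.** If `H` is a hyperplane of `ℂ^d`, `B` a linear automorphism, `I` a
`k`-cube with `1 ≤ k ≤ d`, and `H(I) = ⋂_{i∈I} B^i(H)` has codimension at most `k`, then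
there is a subcube `I'` of `I` and `l ≥ 1` with `B^l(H(I')) = H(I')`. -/
theorem stmt1 (d : ℕ) (hd : 1 ≤ d) (B : (Fin d → ℂ) ≃ₗ[ℂ] (Fin d → ℂ))
    (H : Submodule ℂ (Fin d → ℂ)) (hH : Module.finrank ℂ H = d - 1)
    (k : ℕ) (hk1 : 1 ≤ k) (hkd : k ≤ d)
    (c : ℕ) (cs : Fin k → ℕ) (hcs : ∀ i, 1 ≤ cs i)
    (hcodim : d - k ≤ Module.finrank ℂ (interIter B H (cubeOn c cs))) :
    ∃ T U : Finset (Fin k), Disjoint T U ∧ ∃ l : ℕ, 1 ≤ l ∧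
      Submodule.map ((B ^ l).toLinearMap)
          (interIter B H (cubeOn (c + ∑ i ∈ U, cs i) (fun i : {x // x ∈ T} => cs i)))
        = interIter B H (cubeOn (c + ∑ i ∈ U, cs i) (fun i : {x // x ∈ T} => cs i)) := by
  exact aux d hd B H hH k (Fin k) (Fintype.card_fin k) c cs hcs hcodim
end

section
/- Fix integers d ≥ 2 and 1 ≤ ℓ ≤ d−1. There exists an integer N ≥ 1, depending only on ℓ and d, with the following property. Let B be a linear automorphism of ℂ^d admitting a basis of eigenvectors θ_1,…,θ_d whose eigenvalues are real and have pairwise distinct absolute values, and let W ⊆ ℂ^d be a subspace of dimension d−ℓ such that W ∩ span{θ_i : i ∈ S} = {0} for every S ⊆ {1,…,d} with #S = ℓ. Then for all integers 0 ≤ m_1 < m_2 < ⋯ < m_N there is no ℓ-dimensional subspace E ⊆ ℂ^d satisfying B^{m_u}(E) ∩ W ≠ {0} for every u = 1,…,N. (Equivalently, B^{−m_1}(V) ∩ ⋯ ∩ B^{−m_N}(V) = ∅ for the hyperplane section V = {E : dim E = ℓ, E ∩ W ≠ {0}}.) -/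
/-!
Choose `π` with kernel `W`, let `P` be its matrix in the eigenbasis `θ`, in which `B` is the
diagonal matrix `D`, and let the columns of `Q` span `E`. Then `Bᵐ E` meets `W` exactly when
`det (P Dᵐ Q) = 0`, and expanding the determinant multilinearly writes it as an exponential sum
`∑_g a_g λ_gᵐ` over injections `g : Fin ℓ ↪ Fin d`, where `λ_g = ∏ⱼ μ (g j)` takes at most
`C(d, ℓ)` values. Half of the `2 C(d, ℓ)` exponents share a parity, which reduces everything to
the positive eigenvalues `μᵢ²`; vanishing at `C(d, ℓ)` exponents then forces every fiber sum of
the `a_g` to vanish, since generalized Vandermonde matrices with positive nodes are invertible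
(Descartes' rule of signs). But with `Q` in echelon form for the order of the `|μᵢ|`, the only
`g` with `a_g ≠ 0` and `λ_g = λ_L`, `L` the leading indices of `E`, are the reorderings of `L`,
so that fiber sum is `det P_L * det Q_L ≠ 0`, as `W` meets `span θ_L` trivially.
-/

open Finset Matrix

namespace Polynomial

theorem signVariations_lt_card_support {R : Type*} [Semiring R] [LinearOrder R] {P : R[X]}
    (hP : P ≠ 0) : P.signVariations < #P.support := by
  induction h : #P.support generalizing P with
  | zero => simp_all
  | succ n ih =>
    by_cases hE : P.eraseLead = 0
    · rw [← P.eraseLead_add_monomial_natDegree_leadingCoeff, hE, zero_add,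
        signVariations_monomial]
      omega
    · have := card_support_eraseLead_add_one hP
      have := ih hE (by omega)
      have := P.signVariations_le_eraseLead_succ
      omega

theorem eq_zero_of_card_support_le_card_pos_roots {P : ℝ[X]} {s : Finset ℝ}
    (hs : ∀ x ∈ s, 0 < x ∧ P.IsRoot x) (hcard : #P.support ≤ #s) : P = 0 := by
  classical
  by_contra hP
  have hsub : s ⊆ (P.roots.filter (0 < ·)).toFinset := fun x hx => by
    simpa [hP, (hs x hx).1] using (hs x hx).2
  have := (card_le_card hsub).trans (Multiset.toFinset_card_le _)
  rw [← Multiset.countP_eq_card_filter] at this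
  have := P.roots_countP_pos_le_signVariations
  have := signVariations_lt_card_support hP
  omega

end Polynomial

open Polynomial in
theorem Matrix.det_of_pow_ne_zero {n : Type*} [Fintype n] [DecidableEq n] {x : n → ℝ}
    (hx : Function.Injective x) (hpos : ∀ i, 0 < x i) {t : n → ℕ} (ht : Function.Injective t) :
    (of fun i j => x i ^ t j).det ≠ 0 := by
  intro hdet
  obtain ⟨y, hy, hVy⟩ := exists_mulVec_eq_zero_iff.mpr hdet
  let P : ℝ[X] := ∑ j, monomial (t j) (y j)
  have hcoeff : ∀ j, P.coeff (t j) = y j := fun j => by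
    simp [P, coeff_monomial, ht.eq_iff]
  have hsupp : P.support ⊆ univ.image t := fun k hk => by
    by_contra hkt
    simp_all [P, coeff_monomial]
  have hP : P = 0 := by
    refine eq_zero_of_card_support_le_card_pos_roots (s := univ.image x) ?_ ?_
    · simp only [mem_image, mem_univ, true_and, forall_exists_index, forall_apply_eq_imp_iff]
      refine fun i => ⟨hpos i, ?_⟩
      have := congrFun hVy i
      simpa [P, eval_finsetSum, mulVec, dotProduct, mul_comm] using this
    · rw [card_image_of_injective _ hx]
      exact (card_le_card hsupp).trans (card_image_le.trans (by simp))
  exact hy (funext fun j => by rw [← hcoeff j, hP]; rfl)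

theorem eq_zero_of_sum_mul_pow_eq_zero {n : Type*} [Fintype n] [DecidableEq n] {x : n → ℝ}
    (hx : Function.Injective x) (hpos : ∀ i, 0 < x i) {t : n → ℕ} (ht : Function.Injective t)
    {b : n → ℂ} (h : ∀ j, ∑ i, b i * (x i : ℂ) ^ t j = 0) : b = 0 := by
  have hdet : (of fun i j => (x i : ℂ) ^ t j).det ≠ 0 := by
    have : (of fun i j => (x i : ℂ) ^ t j) =
        Complex.ofRealHom.mapMatrix (of fun i j => x i ^ t j) := by
      ext; simp
    rw [this, ← RingHom.map_det]
    exact Complex.ofReal_ne_zero.mpr (det_of_pow_ne_zero hx hpos ht)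
  by_contra hb
  exact hdet (exists_vecMul_eq_zero_iff.mp
    ⟨b, hb, funext fun j => by simpa [vecMul, dotProduct] using h j⟩)

theorem sum_fiber_eq_zero_of_sum_mul_pow_eq_zero {α : Type*} {G : Finset α}
    {lam : α → ℝ} (hpos : ∀ g ∈ G, 0 < lam g) {K : ℕ} (hK : #(G.image lam) ≤ K)
    {t : Fin K → ℕ} (ht : Function.Injective t) {c : α → ℂ}
    (h : ∀ u, ∑ g ∈ G, c g * (lam g : ℂ) ^ t u = 0) (ρ : ℝ) :
    ∑ g ∈ G with lam g = ρ, c g = 0 := by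
  set R := G.image lam
  by_cases hρ : ρ ∈ R
  swap
  · refine sum_eq_zero fun g hg => absurd ?_ hρ
    obtain ⟨hgG, rfl⟩ := mem_filter.mp hg
    exact mem_image_of_mem lam hgG
  obtain ⟨e⟩ := Function.Embedding.nonempty_of_card_le (α := R) (β := Fin K) (by simpa using hK)
  have hfib : ∀ u, ∑ r : R, (∑ g ∈ G with lam g = r, c g) * ((r : ℝ) : ℂ) ^ t u = 0 := by
    intro u
    rw [← h u, sum_coe_sort R (fun r => (∑ g ∈ G with lam g = r, c g) * (r : ℂ) ^ t u),
      ← sum_fiberwise_of_maps_to (fun g hg => mem_image_of_mem lam hg)]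
    refine sum_congr rfl fun r _ => ?_
    rw [sum_mul]
    exact sum_congr rfl fun g hg => by rw [(mem_filter.mp hg).2]
  have := eq_zero_of_sum_mul_pow_eq_zero (x := ((↑) : R → ℝ)) Subtype.val_injective
    (fun r => by obtain ⟨g, hg, hr⟩ := mem_image.mp r.2; exact hr ▸ hpos g hg)
    (ht.comp e.injective) (fun u => hfib (e u))
  exact congrFun this ⟨ρ, hρ⟩

namespace Matrix

variable {m ι R : Type*} [Fintype m] [DecidableEq m] [CommRing R]

theorem det_mul_diagonal_mul [Fintype ι] [DecidableEq ι] (P : Matrix m ι R) (v : ι → R)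
    (Q : Matrix ι m R) :
    (P * diagonal v * Q).det =
      ∑ g : m ↪ ι, (∏ j, v (g j)) * ((∏ j, P j (g j)) * (Q.submatrix g id).det) := by
  have hrows : P * diagonal v * Q = of fun j => ∑ i, (P j i * v i) • Q i := by
    ext j k
    simp [mul_apply, diagonal_apply, mul_assoc]
  have hall : (P * diagonal v * Q).det =
      ∑ g : m → ι, (∏ j, v (g j)) * ((∏ j, P j (g j)) * (Q.submatrix g id).det) := by
    rw [hrows]
    refine (detRowAlternating.toMultilinearMap.map_sum
      (fun j i => (P j i * v i) • Q i)).trans (sum_congr rfl fun g _ => ?_)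
    rw [MultilinearMap.map_smul_univ, smul_eq_mul, prod_mul_distrib, mul_comm (∏ j, P j (g j)),
      mul_assoc]
    rfl
  refine hall.trans (Fintype.sum_of_injective _ DFunLike.coe_injective _ _ (fun g hg => ?_)
    fun _ => rfl).symm
  have hg : ¬ Function.Injective g := fun hinj => hg ⟨⟨g, hinj⟩, rfl⟩
  obtain ⟨a, b, hab, hne⟩ := Function.not_injective_iff.mp hg
  have hrow : Q.submatrix g id a = Q.submatrix g id b := funext fun k => by
    rw [submatrix_apply, submatrix_apply, hab]
  rw [det_zero_of_row_eq hne hrow, mul_zero, mul_zero]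

theorem sum_perm_mul_det_submatrix (P : Matrix m ι R) (Q : Matrix ι m R) (g : m ↪ ι) :
    ∑ σ : Equiv.Perm m, (∏ j, P j (g (σ j))) * (Q.submatrix (g ∘ σ) id).det =
      (P.submatrix id g).det * (Q.submatrix g id).det := by
  rw [← det_transpose (P.submatrix id g), det_apply', sum_mul]
  refine sum_congr rfl fun σ _ => ?_
  rw [show Q.submatrix (g ∘ σ) id = (Q.submatrix g id).submatrix σ id from rfl, det_permute]
  simp only [transpose_apply, submatrix_apply, id]
  ring

theorem exists_perm_forall_ne_zero_of_det_ne_zero {M : Matrix m m R} (h : M.det ≠ 0) :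
    ∃ σ : Equiv.Perm m, ∀ j, M (σ j) j ≠ 0 := by
  rw [det_apply'] at h
  obtain ⟨σ, -, hσ⟩ := exists_ne_zero_of_sum_ne_zero h
  exact ⟨σ, fun j hj => hσ (by
    rw [prod_eq_zero (f := fun i => M (σ i) i) (mem_univ j) hj, mul_zero])⟩

end Matrix

theorem card_image_prod_embedding_le {ι M : Type*} [Fintype ι] [CommMonoid M] [DecidableEq M]
    (f : ι → M) (ℓ : ℕ) :
    #(univ.image fun g : Fin ℓ ↪ ι => ∏ j, f (g j)) ≤ (Fintype.card ι).choose ℓ := by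
  calc _ ≤ #((powersetCard ℓ (univ : Finset ι)).image fun S => ∏ i ∈ S, f i) := by
        refine card_le_card fun x hx => ?_
        obtain ⟨g, -, rfl⟩ := mem_image.mp hx
        exact mem_image.mpr ⟨univ.map g, by simp [mem_powersetCard], prod_map _ _ _⟩
    _ ≤ _ := card_image_le.trans (by simp [card_powersetCard])

section LeadingIndex

variable {ι K α : Type*} [Field K] [LinearOrder α] (w : ι → α)

def IsLeadingIndex (x : ι → K) (i : ι) : Prop :=
  x i ≠ 0 ∧ ∀ j, x j ≠ 0 → w j ≤ w i

variable {w}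

theorem linearIndependent_of_isLeadingIndex {κ : Type*} {v : κ → ι → K} {f : κ → ι}
    (hf : Function.Injective (w ∘ f)) (hv : ∀ k, IsLeadingIndex w (v k) (f k)) :
    LinearIndependent K v := by
  classical
  rw [linearIndependent_iff']
  intro s c hsum k hk
  by_contra hck
  obtain ⟨k₀, hk₀, hmax⟩ := exists_max_image {k ∈ s | c k ≠ 0} (w ∘ f) ⟨k, by simp [hk, hck]⟩
  obtain ⟨hk₀s, hck₀⟩ := mem_filter.mp hk₀
  have hvanish : ∀ k ∈ s, k ≠ k₀ → c k * v k (f k₀) = 0 := fun k hks hne => by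
    by_cases hc : c k = 0
    · rw [hc, zero_mul]
    by_contra h
    exact hne (hf (le_antisymm (hmax k (by simp [hks, hc]))
      ((hv k).2 _ (right_ne_zero_of_mul h))))
  have := congrFun hsum (f k₀)
  simp only [Finset.sum_apply, Pi.smul_apply, smul_eq_mul, Pi.zero_apply] at this
  rw [sum_eq_single_of_mem k₀ hk₀s hvanish] at this
  exact mul_ne_zero hck₀ (hv k₀).1 this

variable [Fintype ι]

theorem exists_isLeadingIndex {x : ι → K} (hx : x ≠ 0) : ∃ i, IsLeadingIndex w x i := by
  classical
  obtain ⟨j, hj⟩ := Function.ne_iff.mp hx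
  obtain ⟨i, hi, hmax⟩ := exists_max_image {j | x j ≠ 0} w ⟨j, by simpa using hj⟩
  exact ⟨i, (mem_filter.mp hi).2, fun j hj => hmax j (by simpa using hj)⟩

open scoped Classical in
noncomputable def leadingIndices (w : ι → α) (E : Submodule K (ι → K)) : Finset ι :=
  {i | ∃ x ∈ E, IsLeadingIndex w x i}

variable {E : Submodule K (ι → K)}

theorem mem_leadingIndices {i : ι} : i ∈ leadingIndices w E ↔ ∃ x ∈ E, IsLeadingIndex w x i := by
  simp [leadingIndices]

theorem eq_zero_of_forall_leadingIndices {x : ι → K} (hx : x ∈ E)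
    (h : ∀ i ∈ leadingIndices w E, x i = 0) : x = 0 := by
  by_contra hx0
  obtain ⟨i, hi⟩ := exists_isLeadingIndex (w := w) hx0
  exact hi.1 (h i (mem_leadingIndices.mpr ⟨x, hx, hi⟩))

theorem injective_funLeft_comp_subtype {κ : Type*} {f : κ → ι}
    (hf : ∀ i ∈ leadingIndices w E, ∃ j, f j = i) :
    Function.Injective (LinearMap.funLeft K K f ∘ₗ E.subtype) := by
  rw [← LinearMap.ker_eq_bot, LinearMap.ker_eq_bot']
  refine fun x hx => Subtype.ext (eq_zero_of_forall_leadingIndices (w := w) x.2 fun i hi => ?_)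
  obtain ⟨j, rfl⟩ := hf i hi
  exact congrFun hx j

theorem card_leadingIndices (hw : Function.Injective w) :
    #(leadingIndices w E) = Module.finrank K E := by
  apply le_antisymm
  · choose x hxE hx using fun i : leadingIndices w E => mem_leadingIndices.mp i.2
    have hli : LinearIndependent K fun i => (⟨x i, hxE i⟩ : E) := .of_comp E.subtype
      (linearIndependent_of_isLeadingIndex (hw.comp Subtype.val_injective) hx)
    simpa using hli.fintype_card_le_finrank
  · simpa using LinearMap.finrank_le_finrank_of_injective
      (injective_funLeft_comp_subtype (K := K) (w := w) (E := E) (f := Subtype.val)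
        fun i hi => ⟨⟨i, hi⟩, rfl⟩)

theorem exists_echelon_basis (hw : Function.Injective w) {ℓ : ℕ} (hE : Module.finrank K E = ℓ) :
    ∃ (g : Fin ℓ ↪ ι) (Q : Matrix ι (Fin ℓ) K), Q.submatrix g id = 1 ∧
      (∀ i k, Q i k ≠ 0 → w i ≤ w (g k)) ∧ ∀ x ∈ E, Q *ᵥ (x ∘ g) = x := by
  classical
  set L := leadingIndices w E
  let e : Fin ℓ ≃ L := (finCongr (by rw [card_leadingIndices hw, hE])).trans L.equivFin.symm
  let g : Fin ℓ ↪ ι := e.toEmbedding.trans (Function.Embedding.subtype _)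
  have hgL : ∀ i ∈ L, ∃ j, g j = i := fun i hi => ⟨e.symm ⟨i, hi⟩, by simp [g]⟩
  let rE := LinearMap.linearEquivOfInjective _ (injective_funLeft_comp_subtype hgL)
    (by simp [hE])
  let Q := LinearMap.toMatrix' (E.subtype ∘ₗ rE.symm.toLinearMap)
  have hQ : ∀ c, Q *ᵥ c = rE.symm c := fun c => LinearMap.toMatrix'_mulVec _ c
  have hcol : ∀ k, (fun i => Q i k) = rE.symm (Pi.single k 1) := fun k => by
    rw [← hQ]; ext i; simp [Matrix.mulVec_single]
  have hcolg : ∀ j k, Q (g j) k = Pi.single (M := fun _ => K) k 1 j := fun j k => by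
    rw [show Q (g j) k = _ from congrFun (hcol k) (g j)]
    exact congrFun (rE.apply_symm_apply (Pi.single k 1)) j
  refine ⟨g, Q, ?_, fun i k hik => ?_, fun x hx => ?_⟩
  · ext j k
    rw [Matrix.submatrix_apply, hcolg, Pi.single_apply, Matrix.one_apply]
    rfl
  · have hy : (fun i => Q i k) ≠ 0 := fun h => by
      simpa [hcolg] using congrFun h (g k)
    obtain ⟨i₀, hi₀⟩ := exists_isLeadingIndex (w := w) hy
    obtain ⟨j, rfl⟩ := hgL i₀ (mem_leadingIndices.mpr ⟨_, hcol k ▸ (rE.symm _).2, hi₀⟩)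
    obtain rfl : j = k := by
      by_contra hjk
      exact hi₀.1 (by simp [hcolg, hjk])
    exact hi₀.2 i hik
  · rw [hQ]
    exact congrArg Subtype.val (rE.symm_apply_apply ⟨x, hx⟩)

end LeadingIndex

theorem exists_perm_eq_trans_of_det_submatrix_ne_zero {m ι R : Type*} [Fintype m]
    [DecidableEq m] [CommRing R] {μ : ι → ℝ} (hpos : ∀ i, 0 < μ i)
    (hμ : Function.Injective μ) {Q : Matrix ι m R} {g₀ : m ↪ ι}
    (hQ : ∀ i k, Q i k ≠ 0 → μ i ≤ μ (g₀ k)) {g : m ↪ ι} (hg : (Q.submatrix g id).det ≠ 0)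
    (hle : ∏ j, μ (g₀ j) ≤ ∏ j, μ (g j)) : ∃ σ : Equiv.Perm m, g = σ.toEmbedding.trans g₀ := by
  obtain ⟨σ, hσ⟩ := exists_perm_forall_ne_zero_of_det_ne_zero hg
  have hσle : ∀ j, μ (g (σ j)) ≤ μ (g₀ j) := fun j => hQ _ _ (hσ j)
  have heq : ∀ j, g (σ j) = g₀ j := by
    by_contra! h
    obtain ⟨j, hj⟩ := h
    have := prod_lt_prod (fun j _ => hpos (g (σ j))) (fun j _ => hσle j)
      ⟨j, mem_univ j, (hσle j).lt_of_ne (hμ.ne hj)⟩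
    rw [Equiv.prod_comp σ fun j => μ (g j)] at this
    exact this.not_ge hle
  exact ⟨σ.symm, DFunLike.ext _ _ fun j => by simp [← heq]⟩

theorem exists_disjoint_ker_mul_diagonal_pow {ι : Type*} [Fintype ι] [DecidableEq ι] {ℓ K : ℕ}
    {μ : ι → ℝ} (hpos : ∀ i, 0 < μ i) (hμ : Function.Injective μ) {P : Matrix (Fin ℓ) ι ℂ}
    (hP : ∀ g : Fin ℓ ↪ ι, (P.submatrix id g).det ≠ 0) {E : Submodule ℂ (ι → ℂ)}
    (hE : Module.finrank ℂ E = ℓ) {t : Fin K → ℕ} (ht : Function.Injective t)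
    (hK : (Fintype.card ι).choose ℓ ≤ K) :
    ∃ u, Disjoint E (LinearMap.ker (P * diagonal fun i => (μ i : ℂ) ^ t u).mulVecLin) := by
  by_contra! hmeet
  obtain ⟨g₀, Q, hQg₀, hQ, hQE⟩ := exists_echelon_basis hμ hE
  set lam : (Fin ℓ ↪ ι) → ℝ := fun g => ∏ j, μ (g j)
  set a : (Fin ℓ ↪ ι) → ℂ := fun g => (∏ j, P j (g j)) * (Q.submatrix g id).det
  have hsum : ∀ u, ∑ g, a g * (lam g : ℂ) ^ t u = 0 := fun u => by
    obtain ⟨x, hxE, hx, hx0⟩ : ∃ x ∈ E, x ∈ LinearMap.ker _ ∧ x ≠ 0 := by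
      simpa only [Submodule.disjoint_def, not_forall, exists_prop] using hmeet u
    have hdet : (P * diagonal (fun i => (μ i : ℂ) ^ t u) * Q).det = 0 := by
      refine exists_mulVec_eq_zero_iff.mp ⟨x ∘ g₀, fun h => hx0 ?_, ?_⟩
      · rw [← hQE x hxE, h, mulVec_zero]
      · rw [← mulVec_mulVec, hQE x hxE]
        exact hx
    rw [det_mul_diagonal_mul] at hdet
    rw [← hdet]
    refine sum_congr rfl fun g _ => ?_
    simp only [lam, a, Complex.ofReal_prod, prod_pow]
    ring
  have htop := sum_fiber_eq_zero_of_sum_mul_pow_eq_zero (G := univ) (fun g _ => prod_pos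
    fun j _ => hpos (g j)) ((card_image_prod_embedding_le μ ℓ).trans hK) ht hsum (lam g₀)
  have hfiber : ∑ g with lam g = lam g₀, a g =
      ∑ σ : Equiv.Perm (Fin ℓ), a (σ.toEmbedding.trans g₀) := by
    have hinj : Function.Injective fun σ : Equiv.Perm (Fin ℓ) => σ.toEmbedding.trans g₀ :=
      fun σ τ h => Equiv.ext fun j => g₀.injective (DFunLike.congr_fun h j)
    rw [← sum_image fun σ _ τ _ h => hinj h]
    refine (sum_subset (fun g hg => ?_) fun g hg hgσ => ?_).symm
    · obtain ⟨σ, -, rfl⟩ := mem_image.mp hg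
      simpa [lam] using Equiv.prod_comp σ fun j => μ (g₀ j)
    · by_contra hag
      obtain ⟨σ, rfl⟩ := exists_perm_eq_trans_of_det_submatrix_ne_zero hpos hμ hQ
        (right_ne_zero_of_mul hag) (mem_filter.mp hg).2.ge
      exact hgσ (mem_image_of_mem _ (mem_univ σ))
  rw [hfiber] at htop
  refine hP g₀ ?_
  have := sum_perm_mul_det_submatrix P Q g₀
  rw [hQg₀, det_one, mul_one] at this
  rw [← this, ← htop]
  rfl

theorem Module.Basis.repr_pow_apply_of_apply_eq_smul {ι R M : Type*} [CommRing R]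
    [AddCommGroup M] [Module R M] (b : Module.Basis ι R M) {e : M ≃ₗ[R] M} {c : ι → R}
    (he : ∀ i, e (b i) = c i • b i) (n : ℕ) (x : M) (i : ι) :
    b.repr ((e ^ n) x) i = c i ^ n * b.repr x i := by
  have hcoord : (b.coord i).comp e.toLinearMap = c i • b.coord i :=
    b.ext fun j => by by_cases hij : j = i <;> simp [he, hij]
  have hstep : ∀ y, b.repr (e y) i = c i * b.repr y i := fun y => by
    simpa using LinearMap.congr_fun hcoord y
  induction n with
  | zero => simp
  | succ n ih =>
    rw [pow_succ', LinearEquiv.mul_apply, hstep, ih]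
    ring

theorem Submodule.exists_linearMap_ker_eq {K M : Type*} [Field K] [AddCommGroup M] [Module K M]
    [FiniteDimensional K M] (W : Submodule K M) {ℓ : ℕ}
    (h : Module.finrank K W + ℓ = Module.finrank K M) :
    ∃ π : M →ₗ[K] (Fin ℓ → K), LinearMap.ker π = W := by
  have := W.finrank_quotient_add_finrank
  obtain ⟨e⟩ : Nonempty ((M ⧸ W) ≃ₗ[K] (Fin ℓ → K)) :=
    FiniteDimensional.nonempty_linearEquiv_of_finrank_eq (by rw [Module.finrank_fin_fun]; omega)
  exact ⟨e.toLinearMap ∘ₗ W.mkQ, by rw [LinearEquiv.ker_comp, Submodule.ker_mkQ]⟩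

theorem LinearMap.toMatrix_mul_diagonal_pow_mulVec {ι m R M : Type*} [Fintype ι]
    [DecidableEq ι] [Finite m] [CommRing R] [AddCommGroup M] [Module R M]
    (b : Module.Basis ι R M) {e : M ≃ₗ[R] M} {c : ι → R} (he : ∀ i, e (b i) = c i • b i)
    (π : M →ₗ[R] (m → R)) (n : ℕ) (x : M) :
    (toMatrix b (Pi.basisFun R m) π * diagonal fun i => c i ^ n) *ᵥ b.equivFun x =
      π ((e ^ n) x) := by
  have hdiag : (diagonal fun i => c i ^ n) *ᵥ b.equivFun x = b.repr ((e ^ n) x) :=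
    funext fun i => by
      rw [mulVec_diagonal, b.repr_pow_apply_of_apply_eq_smul he, Module.Basis.equivFun_apply]
  rw [← mulVec_mulVec, hdiag, toMatrix_mulVec_repr]
  exact funext fun j => Pi.basisFun_repr _ _ _ j

theorem det_submatrix_toMatrix_ne_zero {ι m K M : Type*} [Fintype ι] [DecidableEq ι]
    [Fintype m] [DecidableEq m] [Field K] [AddCommGroup M] [Module K M] (b : Module.Basis ι K M)
    (π : M →ₗ[K] (m → K)) (g : m ↪ ι)
    (h : Disjoint (LinearMap.ker π) (Submodule.span K (Set.range (b ∘ g)))) :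
    ((LinearMap.toMatrix b (Pi.basisFun K m) π).submatrix id g).det ≠ 0 := by
  intro hdet
  obtain ⟨c, hc, hPc⟩ := exists_mulVec_eq_zero_iff.mpr hdet
  set v := ∑ k, c k • b (g k)
  have hπv : π v = 0 := funext fun j => by
    simpa [v, mulVec, dotProduct, LinearMap.toMatrix_apply, mul_comm] using congrFun hPc j
  have hv : v = 0 := Submodule.disjoint_def.mp h v hπv
    (Submodule.sum_mem _ fun k _ => Submodule.smul_mem _ _ (Submodule.subset_span ⟨k, rfl⟩))
  exact hc (funext (Fintype.linearIndependent_iff.mp (b.linearIndependent.comp g g.injective) c hv))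

theorem exists_injective_two_mul_add_eq {K : ℕ} {m : Fin (2 * K) → ℕ}
    (hm : Function.Injective m) :
    ∃ p, ∃ t : Fin K → ℕ, Function.Injective t ∧ ∀ u, ∃ v, m v = 2 * t u + p := by
  let parity : Fin (2 * K) → Fin 2 := fun v => ⟨m v % 2, Nat.mod_lt _ two_pos⟩
  obtain ⟨p, hp⟩ := Fintype.exists_le_card_fiber_of_mul_le_card parity (n := K) (by simp)
  obtain ⟨e⟩ := Function.Embedding.nonempty_of_card_le (α := Fin K)
    (β := ({v | parity v = p} : Finset _)) (by rwa [Fintype.card_coe, Fintype.card_fin])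
  have hmod : ∀ u, m (e u) % 2 = p := fun u => congrArg Fin.val (mem_filter.mp (e u).2).2
  have hmt : ∀ u, m (e u) = 2 * (m (e u) / 2) + p := fun u => by
    rw [← hmod u, Nat.div_add_mod]
  refine ⟨p, fun u => m (e u) / 2, fun a b h => ?_, fun u => ⟨e u, hmt u⟩⟩
  have h' : m (e a) / 2 = m (e b) / 2 := h
  exact e.injective (Subtype.ext (hm (by rw [hmt a, hmt b, h'])))

theorem stmt3_general (d ℓ : ℕ) (hℓd : ℓ ≤ d - 1) :
    ∃ N : ℕ, 1 ≤ N ∧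
      ∀ (B : (Fin d → ℂ) ≃ₗ[ℂ] (Fin d → ℂ)) (θ : Module.Basis (Fin d) ℂ (Fin d → ℂ))
        (μ : Fin d → ℝ),
        (∀ i, B (θ i) = (μ i : ℂ) • θ i) →
        (∀ i j, i ≠ j → |μ i| ≠ |μ j|) →
        ∀ W : Submodule ℂ (Fin d → ℂ), Module.finrank ℂ W = d - ℓ →
        (∀ S : Finset (Fin d), S.card = ℓ →
          W ⊓ Submodule.span ℂ (⇑θ '' (S : Set (Fin d))) = ⊥) →
        ∀ m : Fin N → ℕ, StrictMono m →
        ¬ ∃ E : Submodule ℂ (Fin d → ℂ), Module.finrank ℂ E = ℓ ∧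
          ∀ u : Fin N, E.map ((B ^ (m u)).toLinearMap) ⊓ W ≠ ⊥ := by
  refine ⟨2 * d.choose ℓ, by have := Nat.choose_pos (show ℓ ≤ d by omega); omega, ?_⟩
  intro B θ μ hBθ hμ W hW hWθ m hm ⟨E, hE, hEW⟩
  obtain ⟨p, t, ht, hmt⟩ := exists_injective_two_mul_add_eq hm.injective
  obtain ⟨π, hπ⟩ := W.exists_linearMap_ker_eq (ℓ := ℓ) (by rw [hW, Module.finrank_fin_fun]; omega)
  have hμ0 : ∀ i, μ i ≠ 0 := fun i h => θ.ne_zero i (B.map_eq_zero_iff.mp (by simp [hBθ, h]))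
  have hμsq : Function.Injective fun i => μ i ^ 2 := fun i j h =>
    by_contra fun hij => hμ i j hij ((sq_eq_sq_iff_abs_eq_abs _ _).mp h)
  have hPθ : ∀ g : Fin ℓ ↪ Fin d,
      ((LinearMap.toMatrix θ (Pi.basisFun ℂ (Fin ℓ)) π).submatrix id g).det ≠ 0 := fun g => by
    refine det_submatrix_toMatrix_ne_zero θ π g ?_
    rw [hπ, disjoint_iff, Set.range_comp]
    simpa using hWθ (univ.map g) (by simp)
  obtain ⟨u, hu⟩ := exists_disjoint_ker_mul_diagonal_pow (fun i => pow_two_pos_of_ne_zero (hμ0 i))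
    hμsq hPθ (E := E.map ((B ^ p).trans θ.equivFun).toLinearMap)
    (by rw [LinearEquiv.finrank_map_eq, hE]) ht (by simp)
  obtain ⟨v, hv⟩ := hmt u
  obtain ⟨y, hy, hy0⟩ := Submodule.exists_mem_ne_zero_of_ne_bot (hEW v)
  obtain ⟨⟨x, hx, rfl⟩, hyW⟩ := Submodule.mem_inf.mp hy
  refine hy0 ?_
  suffices θ.equivFun ((B ^ p) x) = 0 by simpa using this
  refine Submodule.disjoint_def.mp hu _ (Submodule.mem_map_of_mem hx) ?_
  have hdiag : (fun i => ((μ i ^ 2 : ℝ) : ℂ) ^ t u) = fun i => (μ i : ℂ) ^ (2 * t u) := by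
    ext; push_cast; ring
  rw [LinearMap.mem_ker, mulVecLin_apply, hdiag, LinearMap.toMatrix_mul_diagonal_pow_mulVec θ hBθ,
    ← LinearEquiv.mul_apply, ← pow_add, ← hv, ← LinearMap.mem_ker, hπ]
  exact hyW

/-- **Proposition B.1.** There is `N = N(ℓ,d)` such that for every linear automorphism `B`
of `ℂ^d` with a basis of eigenvectors whose eigenvalues are real with pairwise distinct
absolute values, every `(d-ℓ)`-dimensional subspace `W` meeting every sum of `ℓ`
eigenspaces trivially, and all `0 ≤ m_1 < ⋯ < m_N`, there is no `ℓ`-dimensional subspace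
`E` with `B^{m_u}(E) ∩ W ≠ {0}` for all `u`. -/
theorem stmt3 (d ℓ : ℕ) (hd : 2 ≤ d) (hℓ1 : 1 ≤ ℓ) (hℓd : ℓ ≤ d - 1) :
    ∃ N : ℕ, 1 ≤ N ∧
      ∀ (B : (Fin d → ℂ) ≃ₗ[ℂ] (Fin d → ℂ)) (θ : Module.Basis (Fin d) ℂ (Fin d → ℂ))
        (μ : Fin d → ℝ),
        (∀ i, B (θ i) = (μ i : ℂ) • θ i) →
        (∀ i j, i ≠ j → |μ i| ≠ |μ j|) →
        ∀ W : Submodule ℂ (Fin d → ℂ), Module.finrank ℂ W = d - ℓ →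
        (∀ S : Finset (Fin d), S.card = ℓ →
          W ⊓ Submodule.span ℂ (⇑θ '' (S : Set (Fin d))) = ⊥) →
        ∀ m : Fin N → ℕ, StrictMono m →
        ¬ ∃ E : Submodule ℂ (Fin d → ℂ), Module.finrank ℂ E = ℓ ∧
          ∀ u : Fin N, E.map ((B ^ (m u)).toLinearMap) ⊓ W ≠ ⊥ :=
  stmt3_general d ℓ hℓd
end

section
/- Fix integers 1 ≤ ℓ ≤ d−1 and reals b_1 > b_2 > ⋯ > b_d > 0. Let M be an ℓ×d complex matrix with minors ω_M(I) as below, and let (c_I) be a family of nonzero complex numbers indexed by the ℓ-element subsets I ⊆ {1,…,d}. Suppose that for every ℓ-element subset I one has Σ_J c_J · ω_M(J) = 0, where the sum runs over all ℓ-element subsets J with p_J = p_I. Then ω_M(I) = 0 for every ℓ-element subset I; equivalently, the rows of M are linearly dependent. -/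
/-!
If some minor `ω_M(I)` is nonzero, the columns of `M` span `ℂ^ℓ`, and the greedy choice of
columns (take a column whenever it is not in the span of the earlier ones) gives a set `P`
with `ω_M(P) ≠ 0`. Counting ranks of initial segments shows that the sorted elements of `P`
are pointwise smaller than those of every `J` with `ω_M(J) ≠ 0` (Gale order). Since `b` is
strictly decreasing and positive, `p_J < p_P` for every such `J ≠ P`, so the relation for `I = P`
reduces to `c_P ω_M(P) = 0`, which is impossible.
-/

/-- The minor `ω_M(I)` of an `ℓ×d` matrix `M`: the determinant of the `ℓ×ℓ` submatrix of
`M` whose columns are those indexed by `I`, taken in increasing order (defined to be `0`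
when `I` does not have `ℓ` elements). -/
noncomputable def minorOn {ℓ d : ℕ} (M : Matrix (Fin ℓ) (Fin d) ℂ)
    (I : Finset (Fin d)) : ℂ :=
  if h : I.card = ℓ then
    (M.submatrix id (fun t : Fin ℓ => ((I.orderIsoOfFin h t) : Fin d))).det
  else 0

open Finset Submodule Module Matrix

namespace Finset

variable {α : Type*} [LinearOrder α] {s t : Finset α} {k : ℕ}

theorem prod_eq_prod_orderEmbOfFin {M : Type*} [CommMonoid M] (f : α → M) (hs : #s = k) :
    ∏ x ∈ s, f x = ∏ i, f (s.orderEmbOfFin hs i) := by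
  conv_lhs => rw [← map_orderEmbOfFin_univ s hs]
  rw [prod_map]; rfl

theorem eq_of_orderEmbOfFin_eq (hs : #s = k) (ht : #t = k)
    (h : ∀ i, s.orderEmbOfFin hs i = t.orderEmbOfFin ht i) : s = t := by
  rw [← image_orderEmbOfFin_univ s hs, ← image_orderEmbOfFin_univ t ht]
  exact image_congr fun i _ => h i

theorem orderEmbOfFin_le_of_card_filter_le (hs : #s = k) (ht : #t = k)
    (h : ∀ a, #{x ∈ t | x ≤ a} ≤ #{x ∈ s | x ≤ a}) (i : Fin k) :
    s.orderEmbOfFin hs i ≤ t.orderEmbOfFin ht i := by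
  by_contra! hlt
  set a := t.orderEmbOfFin ht i
  have h_t : (i : ℕ) + 1 ≤ #{x ∈ t | x ≤ a} := by
    calc (i : ℕ) + 1 = #((Iic i).map (t.orderEmbOfFin ht).toEmbedding) := by simp
      _ ≤ _ := card_le_card fun x hx => by
        obtain ⟨j, hj, rfl⟩ := mem_map.mp hx
        exact mem_filter.mpr
          ⟨orderEmbOfFin_mem t ht j, (t.orderEmbOfFin ht).monotone (mem_Iic.mp hj)⟩
  have h_s : #{x ∈ s | x ≤ a} ≤ i := by
    calc #{x ∈ s | x ≤ a} ≤ #((Iio i).map (s.orderEmbOfFin hs).toEmbedding) :=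
          card_le_card fun x hx => by
            obtain ⟨hxs, hxa⟩ := mem_filter.mp hx
            obtain ⟨j, rfl⟩ : x ∈ Set.range (s.orderEmbOfFin hs) := by
              rwa [range_orderEmbOfFin]
            exact mem_map_of_mem _
              (mem_Iio.mpr ((s.orderEmbOfFin hs).lt_iff_lt.mp (hxa.trans_lt hlt)))
      _ = i := by simp
  have := h a
  omega

theorem prod_lt_prod_of_orderEmbOfFin_le {R : Type*} [CommSemiring R] [PartialOrder R]
    [IsStrictOrderedRing R] {b : α → R} (hb : StrictAnti b) (hpos : ∀ x, 0 < b x)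
    (hs : #s = k) (ht : #t = k) (hle : ∀ i, s.orderEmbOfFin hs i ≤ t.orderEmbOfFin ht i)
    (hne : s ≠ t) : ∏ x ∈ t, b x < ∏ x ∈ s, b x := by
  rw [prod_eq_prod_orderEmbOfFin b hs, prod_eq_prod_orderEmbOfFin b ht]
  obtain ⟨i, hi⟩ : ∃ i, s.orderEmbOfFin hs i ≠ t.orderEmbOfFin ht i := by
    by_contra! h
    exact hne (eq_of_orderEmbOfFin_eq hs ht h)
  exact prod_lt_prod (fun _ _ => hpos _) (fun j _ => hb.antitone (hle j))
    ⟨i, mem_univ i, hb ((hle i).lt_of_ne hi)⟩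

end Finset

variable {K V ι : Type*} [Field K] [AddCommGroup V] [Module K V]

theorem LinearIndepOn.finrank_span_image_finset {v : ι → V} {s : Finset ι}
    (hs : LinearIndepOn K v (s : Set ι)) : finrank K (span K (v '' s)) = #s := by
  rw [Set.image_eq_range, finrank_span_eq_card hs]
  simp

section Pivots

variable {d : ℕ}

variable (K) in
open Classical in
noncomputable def pivots (v : Fin d → V) : Finset (Fin d) :=
  univ.filter fun j => v j ∉ span K (v '' Set.Iio j)

variable {v : Fin d → V}

theorem mem_pivots {j : Fin d} : j ∈ pivots K v ↔ v j ∉ span K (v '' Set.Iio j) := by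
  classical
  simp [pivots]

theorem linearIndepOn_pivots_filter_lt_and_span_eq {n : ℕ} (hn : n ≤ d) :
    LinearIndepOn K v ((pivots K v).filter (fun j : Fin d => (j : ℕ) < n) : Set (Fin d)) ∧
      span K (v '' ((pivots K v).filter (fun j : Fin d => (j : ℕ) < n) : Set (Fin d))) =
        span K (v '' {j : Fin d | (j : ℕ) < n}) := by
  induction n with
  | zero => simp
  | succ n ih =>
    obtain ⟨ih_indep, ih_span⟩ := ih (by omega)
    set x : Fin d := ⟨n, hn⟩
    have hIio : Set.Iio x = {j : Fin d | (j : ℕ) < n} := by ext j; simp [Fin.lt_def, x]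
    have hlt : {j : Fin d | (j : ℕ) < n + 1} = insert x {j : Fin d | (j : ℕ) < n} := by
      ext j
      simp only [Order.lt_add_one_iff, Set.mem_ofPred_eq, Set.mem_insert_iff, Fin.ext_iff, x]
      omega
    rw [hlt, Set.image_insert_eq, span_insert, ← ih_span]
    by_cases hx : x ∈ pivots K v
    · have hfilter : ((pivots K v).filter (fun j : Fin d => (j : ℕ) < n + 1) : Set (Fin d)) =
          insert x ((pivots K v).filter (fun j : Fin d => (j : ℕ) < n) : Set (Fin d)) := by
        ext j
        simp only [coe_filter, Set.mem_insert_iff, Set.mem_ofPred_eq, Fin.ext_iff, x]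
        constructor
        · rintro ⟨hj, hjn⟩
          exact (Nat.lt_succ_iff_lt_or_eq.mp hjn).symm.imp_right (⟨hj, ·⟩)
        · rintro (hj | ⟨hj, hjn⟩)
          · exact ⟨(Fin.ext hj : j = x) ▸ hx, by omega⟩
          · exact ⟨hj, by omega⟩
      rw [mem_pivots, hIio, ← ih_span] at hx
      rw [hfilter, Set.image_insert_eq, span_insert]
      exact ⟨ih_indep.insert hx, rfl⟩
    · have hfilter : (pivots K v).filter (fun j : Fin d => (j : ℕ) < n + 1) =
          (pivots K v).filter (fun j : Fin d => (j : ℕ) < n) := by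
        refine filter_congr fun j hj => ⟨fun hjn => ?_, by omega⟩
        refine (Nat.lt_succ_iff_lt_or_eq.mp hjn).resolve_right fun h => hx ?_
        exact (Fin.ext h : j = x) ▸ hj
      rw [mem_pivots, not_not, hIio, ← ih_span] at hx
      rw [hfilter, sup_eq_right.mpr ((span_singleton_le_iff_mem _ _).mpr hx)]
      exact ⟨ih_indep, rfl⟩

theorem linearIndepOn_pivots : LinearIndepOn K v (pivots K v : Set (Fin d)) := by
  simpa using (linearIndepOn_pivots_filter_lt_and_span_eq (K := K) (v := v) le_rfl).1

theorem card_filter_lt_le_card_pivots_filter_lt {J : Finset (Fin d)}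
    (hJ : LinearIndepOn K v (J : Set (Fin d))) {n : ℕ} (hn : n ≤ d) :
    #(J.filter fun j : Fin d => (j : ℕ) < n) ≤
      #((pivots K v).filter fun j : Fin d => (j : ℕ) < n) := by
  obtain ⟨hP, hspan⟩ := linearIndepOn_pivots_filter_lt_and_span_eq (K := K) (v := v) hn
  have := FiniteDimensional.span_of_finite K ((Set.toFinite {j : Fin d | (j : ℕ) < n}).image v)
  rw [← (hJ.mono (coe_subset.mpr (filter_subset _ _))).finrank_span_image_finset,
    ← hP.finrank_span_image_finset, hspan]
  exact finrank_mono (span_mono (Set.image_mono fun j hj => (mem_filter.mp hj).2))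

theorem card_le_card_pivots {J : Finset (Fin d)} (hJ : LinearIndepOn K v (J : Set (Fin d))) :
    #J ≤ #(pivots K v) := by
  simpa using card_filter_lt_le_card_pivots_filter_lt hJ le_rfl

theorem orderEmbOfFin_pivots_le {J : Finset (Fin d)} (hJ : LinearIndepOn K v (J : Set (Fin d)))
    {k : ℕ} (hP : #(pivots K v) = k) (hJk : #J = k) (i : Fin k) :
    (pivots K v).orderEmbOfFin hP i ≤ J.orderEmbOfFin hJk i := by
  refine orderEmbOfFin_le_of_card_filter_le hP hJk (fun a => ?_) i
  simpa [Nat.lt_succ_iff, ← Fin.le_def] using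
    card_filter_lt_le_card_pivots_filter_lt hJ (Nat.succ_le_of_lt a.isLt)

theorem prod_lt_prod_pivots {R : Type*} [CommSemiring R] [PartialOrder R] [IsStrictOrderedRing R]
    {b : Fin d → R} (hb : StrictAnti b) (hpos : ∀ i, 0 < b i) {J : Finset (Fin d)}
    (hJ : LinearIndepOn K v (J : Set (Fin d))) (hcard : #J = #(pivots K v))
    (hne : J ≠ pivots K v) : ∏ i ∈ J, b i < ∏ i ∈ pivots K v, b i :=
  prod_lt_prod_of_orderEmbOfFin_le hb hpos rfl hcard (orderEmbOfFin_pivots_le hJ rfl hcard)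
    hne.symm

end Pivots

theorem minorOn_ne_zero_iff {ℓ d : ℕ} (M : Matrix (Fin ℓ) (Fin d) ℂ) {J : Finset (Fin d)}
    (hJ : #J = ℓ) : minorOn M J ≠ 0 ↔ LinearIndepOn ℂ Mᵀ (J : Set (Fin d)) := by
  rw [minorOn, dif_pos hJ, ← isUnit_iff_ne_zero, ← isUnit_iff_isUnit_det,
    ← linearIndependent_cols_iff_isUnit]
  exact linearIndependent_equiv (f := fun j : (J : Set (Fin d)) => Mᵀ j)
    (J.orderIsoOfFin hJ).toEquiv

open scoped Classical in
theorem stmt4_general (ℓ d : ℕ)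
    (b : Fin d → ℝ) (hb : StrictAnti b) (hbpos : ∀ i, 0 < b i)
    (M : Matrix (Fin ℓ) (Fin d) ℂ)
    (c : Finset (Fin d) → ℂ) (hc : ∀ I : Finset (Fin d), I.card = ℓ → c I ≠ 0)
    (hsum : ∀ I : Finset (Fin d), I.card = ℓ →
      ∑ J ∈ Finset.univ.filter
          (fun J : Finset (Fin d) => J.card = ℓ ∧ ∏ i ∈ J, b i = ∏ i ∈ I, b i),
        c J * minorOn M J = 0) :
    ∀ I : Finset (Fin d), I.card = ℓ → minorOn M I = 0 := by
  intro I hI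
  by_contra hMI
  set P := pivots ℂ Mᵀ
  have hP_indep : LinearIndepOn ℂ Mᵀ (P : Set (Fin d)) := linearIndepOn_pivots
  have hP_card : #P = ℓ := by
    refine le_antisymm ?_ (hI ▸ card_le_card_pivots ((minorOn_ne_zero_iff M hI).mp hMI))
    simpa using hP_indep.linearIndependent.fintype_card_le_finrank
  have hP_minor : minorOn M P ≠ 0 := (minorOn_ne_zero_iff M hP_card).mpr hP_indep
  refine mul_ne_zero (hc P hP_card) hP_minor ?_
  rw [← hsum P hP_card, sum_eq_single_of_mem P (by simp [hP_card])]
  intro J hJ hJP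
  obtain ⟨hJ_card, hJ_prod⟩ := (mem_filter.mp hJ).2
  by_contra hJ_minor
  exact (prod_lt_prod_pivots hb hbpos ((minorOn_ne_zero_iff M hJ_card).mp
    (right_ne_zero_of_mul hJ_minor)) (hJ_card.trans hP_card.symm) hJP).ne hJ_prod

open scoped Classical in
/-- **Lemma B.3.** Fix `b_1 > ⋯ > b_d > 0` and an `ℓ×d` complex matrix `M`, and nonzero
scalars `c_I` indexed by the `ℓ`-element subsets of `{1,…,d}`. If for every `ℓ`-element
subset `I` one has `∑_{J : p_J = p_I} c_J ω_M(J) = 0` (where `p_J = ∏_{i∈J} b_i`), then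
`ω_M(I) = 0` for every `ℓ`-element subset `I`. -/
theorem stmt4 (ℓ d : ℕ) (hℓ1 : 1 ≤ ℓ) (hℓd : ℓ ≤ d - 1)
    (b : Fin d → ℝ) (hb : StrictAnti b) (hbpos : ∀ i, 0 < b i)
    (M : Matrix (Fin ℓ) (Fin d) ℂ)
    (c : Finset (Fin d) → ℂ) (hc : ∀ I : Finset (Fin d), I.card = ℓ → c I ≠ 0)
    (hsum : ∀ I : Finset (Fin d), I.card = ℓ →
      ∑ J ∈ Finset.univ.filter
          (fun J : Finset (Fin d) => J.card = ℓ ∧ ∏ i ∈ J, b i = ∏ i ∈ I, b i),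
        c J * minorOn M J = 0) :
    ∀ I : Finset (Fin d), I.card = ℓ → minorOn M I = 0 :=
  stmt4_general ℓ d b hb hbpos M c hc hsum
end

section
/- Fix integers 1 ≤ ℓ ≤ d and reals b_1 > b_2 > ⋯ > b_d > 0, and let M be an ℓ×d complex matrix. Let I ⊆ {1,…,d} be an ℓ-element subset such that the columns {M^i : i ∈ I} are linearly independent (ω_M(I) ≠ 0) and such that ω_M(J) = 0 for every ℓ-element subset J with p_J > p_I. Then for every j ∈ {1,…,d}∖I and every subset T ⊆ I with at most ℓ−1 elements that contains every element of I smaller than j, the family of columns {M^i : i ∈ T} ∪ {M^j} is linearly dependent. -/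
open Submodule Finsupp in
theorem LinearIndepOn.exists_notMem_span_diff_singleton {K V ι : Type*} [Field K]
    [AddCommGroup V] [Module K V] {v : ι → V} {I T : Set ι} {x : V}
    (hI : LinearIndepOn K v I) (hxI : x ∈ span K (v '' I)) (hxT : x ∉ span K (v '' T)) :
    ∃ s ∈ I, s ∉ T ∧ x ∉ span K (v '' (I \ {s})) := by
  obtain ⟨l, hlI, rfl⟩ := (mem_span_image_iff_linearCombination K).mp hxI
  obtain ⟨s, hsl, hsT⟩ : ∃ s ∈ l.support, s ∉ T := by
    by_contra! hlT
    exact hxT ((mem_span_image_iff_linearCombination K).mpr ⟨l, hlT, rfl⟩)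
  refine ⟨s, hlI hsl, hsT, fun hs => ?_⟩
  obtain ⟨l', hl'I, hl'⟩ := (mem_span_image_iff_linearCombination K).mp hs
  have hll' : l' = l := linearIndepOn_iffₛ.mp hI l'
    (supported_mono Set.sdiff_subset hl'I) l hlI hl'
  exact (hl'I (hll' ▸ hsl)).2 rfl

theorem minorOn_ne_zero_of_linearIndepOn {ℓ d : ℕ} {M : Matrix (Fin ℓ) (Fin d) ℂ}
    {J : Finset (Fin d)} (hJ : J.card = ℓ)
    (hJindep : LinearIndepOn ℂ (fun i => M.transpose i) (J : Set (Fin d))) :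
    minorOn M J ≠ 0 := by
  rw [minorOn, dif_pos hJ, ← isUnit_iff_ne_zero, ← Matrix.isUnit_iff_isUnit_det,
    ← Matrix.linearIndependent_cols_iff_isUnit]
  exact hJindep.linearIndependent.comp _ (J.orderIsoOfFin hJ).injective

theorem Finset.prod_lt_prod_insert_erase {ι : Type*} [DecidableEq ι] {b : ι → ℝ}
    {I : Finset ι} {s j : ι} (hb : ∀ i ∈ I, 0 < b i) (hs : s ∈ I) (hj : j ∉ I)
    (hsj : b s < b j) :
    ∏ i ∈ I, b i < ∏ i ∈ insert j (I.erase s), b i := by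
  rw [prod_insert (fun h => hj (mem_of_mem_erase h)), ← mul_prod_erase I b hs]
  exact mul_lt_mul_of_pos_right hsj (prod_pos fun i hi => hb i (mem_of_mem_erase hi))

theorem stmt6_general (ℓ d : ℕ)
    (b : Fin d → ℝ) (hb : StrictAnti b) (hbpos : ∀ i, 0 < b i)
    (M : Matrix (Fin ℓ) (Fin d) ℂ)
    (I : Finset (Fin d)) (hI : I.card = ℓ)
    (hIindep : LinearIndependent ℂ (fun i : {x // x ∈ I} => M.transpose (i : Fin d)))
    (hvanish : ∀ J : Finset (Fin d), J.card = ℓ →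
      (∏ i ∈ I, b i) < ∏ i ∈ J, b i → minorOn M J = 0) :
    ∀ j : Fin d, j ∉ I →
      ∀ T : Finset (Fin d), T ⊆ I → T.card ≤ ℓ - 1 →
        (∀ i ∈ I, i < j → i ∈ T) →
        ¬ LinearIndependent ℂ
            (fun i : {x // x ∈ insert j T} => M.transpose (i : Fin d)) := by
  intro j hjI T hTI _ hTlt hli
  set v : Fin d → (Fin ℓ → ℂ) := fun i => M.transpose i
  have hIv : LinearIndepOn ℂ v (I : Set (Fin d)) := hIindep
  have hspan : Submodule.span ℂ (v '' I) = ⊤ := by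
    rw [Set.image_eq_range]
    exact hIindep.span_eq_top_of_card_eq_finrank' (by simp [hI])
  have hjT : v j ∉ Submodule.span ℂ (v '' T) :=
    ((linearIndepOn_insert fun h => hjI (hTI h)).mp (by rwa [← Finset.coe_insert])).2
  obtain ⟨s, hsI, hsT, hjspan⟩ :=
    hIv.exists_notMem_span_diff_singleton (hspan ▸ Submodule.mem_top) hjT
  have hjs : j < s := by
    rcases lt_trichotomy j s with h | rfl | h
    exacts [h, absurd hsI hjI, absurd (hTlt s hsI h) hsT]
  have hJindep : LinearIndepOn ℂ v (insert j (I.erase s) : Finset (Fin d)) := by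
    rw [Finset.coe_insert, Finset.coe_erase]
    exact ((hIv.mono Set.sdiff_subset).notMem_span_iff.mp hjspan).1
  have hJcard : (insert j (I.erase s)).card = ℓ := by
    rw [Finset.card_insert_of_notMem fun h => hjI (Finset.mem_of_mem_erase h),
      Finset.card_erase_add_one hsI, hI]
  exact minorOn_ne_zero_of_linearIndepOn hJcard hJindep (hvanish _ hJcard
    (Finset.prod_lt_prod_insert_erase (fun i _ => hbpos i) hsI hjI (hb hjs)))

/-- **Lemma B.5.** Fix `b_1 > ⋯ > b_d > 0` and an `ℓ×d` complex matrix `M`. Let `I` be an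
`ℓ`-element subset of `{1,…,d}` whose columns are linearly independent (`ω_M(I) ≠ 0`) and
such that `ω_M(J) = 0` whenever `p_J > p_I` (with `p_J = ∏_{i∈J} b_i`). Then for every
`j ∉ I` and every `T ⊆ I` with at most `ℓ-1` elements containing all elements of `I`
smaller than `j`, the columns `{M^i : i ∈ T} ∪ {M^j}` are linearly dependent. -/
theorem stmt6 (ℓ d : ℕ) (hℓ1 : 1 ≤ ℓ) (hℓd : ℓ ≤ d)
    (b : Fin d → ℝ) (hb : StrictAnti b) (hbpos : ∀ i, 0 < b i)
    (M : Matrix (Fin ℓ) (Fin d) ℂ)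
    (I : Finset (Fin d)) (hI : I.card = ℓ)
    (hIindep : LinearIndependent ℂ (fun i : {x // x ∈ I} => M.transpose (i : Fin d)))
    (hvanish : ∀ J : Finset (Fin d), J.card = ℓ →
      (∏ i ∈ I, b i) < ∏ i ∈ J, b i → minorOn M J = 0) :
    ∀ j : Fin d, j ∉ I →
      ∀ T : Finset (Fin d), T ⊆ I → T.card ≤ ℓ - 1 →
        (∀ i ∈ I, i < j → i ∈ T) →
        ¬ LinearIndependent ℂ
            (fun i : {x // x ∈ insert j T} => M.transpose (i : Fin d)) :=
  stmt6_general ℓ d b hb hbpos M I hI hIindep hvanish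
end

section
/- Let (X, dist) be a metric space, f : X → X a map, and A a map from X to the invertible bounded linear operators on ℂ^d (with the operator norm). Suppose there are constants C > 0, ν ∈ (0,1], θ ∈ (0,1) and τ ∈ (0,1) such that for all x, y ∈ X: ‖A(x)‖ ≤ C, ‖A(x)^{−1}‖ ≤ C, ‖A(x) − A(y)‖ ≤ C·dist(x,y)^ν, and ‖A(x)‖·‖A(x)^{−1}‖·θ^ν < τ. Fix D > 0. Then there exist constants Ĉ > 0 and τ̂ ∈ (0,1), depending only on d, C, ν, θ, τ and D, with the following property: whenever x, y ∈ X satisfy dist(x,y) ≤ D and dist(f^n(x), f^n(y)) ≤ θ^n·dist(x,y) for every n ≥ 0, the sequence H_n = A^n(y)^{−1} ∘ A^n(x) satisfies ‖H_{n+1} − H_n‖ ≤ Ĉ·τ̂^n·dist(x,y)^ν for all n ≥ 0; in particular, H_n converges in operator norm to a limit H^s_{x,y} = lim_{n→∞} A^n(y)^{−1} A^n(x). -/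
open Filter

/-- The cocycle products `A^n(x) = A(f^{n-1}(x)) ⋯ A(f(x)) A(x)` of a map
`A : X → GL(E)` over `f : X → X`. -/
def cocycle {X E : Type} [NormedAddCommGroup E] [NormedSpace ℂ E]
    (f : X → X) (A : X → (E ≃L[ℂ] E)) : ℕ → X → (E ≃L[ℂ] E)
  | 0, _ => ContinuousLinearEquiv.refl ℂ E
  | n + 1, x => (A x).trans (cocycle f A n (f x))

open Finset

section Aux
variable {X E : Type} [NormedAddCommGroup E] [NormedSpace ℂ E]

lemma cocycle_succ' (f : X → X) (A : X → (E ≃L[ℂ] E)) (n : ℕ) (x : X) :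
    cocycle f A (n+1) x = (cocycle f A n x).trans (A (f^[n] x)) := by
  induction n generalizing x with
  | zero => ext v; simp [cocycle]
  | succ n ih =>
    show (A x).trans (cocycle f A (n+1) (f x)) = _
    rw [ih (f x)]
    ext v
    simp [cocycle, Function.iterate_succ_apply]

lemma norm_cocycle_le (f : X → X) (A : X → (E ≃L[ℂ] E)) (x : X) (n : ℕ) :
    ‖(cocycle f A n x : E →L[ℂ] E)‖ ≤ ∏ k ∈ range n, ‖(A (f^[k] x) : E →L[ℂ] E)‖ := by
  induction n with
  | zero => simpa [cocycle] using ContinuousLinearMap.norm_id_le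
  | succ n ih =>
    rw [cocycle_succ', prod_range_succ]
    calc ‖((A (f^[n] x)) : E →L[ℂ] E).comp (cocycle f A n x : E →L[ℂ] E)‖
        ≤ ‖(A (f^[n] x) : E →L[ℂ] E)‖ * ‖(cocycle f A n x : E →L[ℂ] E)‖ :=
          ContinuousLinearMap.opNorm_comp_le _ _
      _ ≤ _ := by
          rw [mul_comm]
          exact mul_le_mul_of_nonneg_right ih (norm_nonneg _)

lemma norm_symm_cocycle_le (f : X → X) (A : X → (E ≃L[ℂ] E)) (x : X) (n : ℕ) :
    ‖((cocycle f A n x).symm : E →L[ℂ] E)‖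
      ≤ ∏ k ∈ range n, ‖((A (f^[k] x)).symm : E →L[ℂ] E)‖ := by
  induction n with
  | zero => simpa [cocycle] using ContinuousLinearMap.norm_id_le
  | succ n ih =>
    rw [cocycle_succ', prod_range_succ]
    calc ‖(((cocycle f A n x).symm : E →L[ℂ] E)).comp ((A (f^[n] x)).symm : E →L[ℂ] E)‖
        ≤ ‖((cocycle f A n x).symm : E →L[ℂ] E)‖ * ‖((A (f^[n] x)).symm : E →L[ℂ] E)‖ :=
          ContinuousLinearMap.opNorm_comp_le _ _
      _ ≤ _ := mul_le_mul_of_nonneg_right ih (norm_nonneg _)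

lemma diff_eq (f : X → X) (A : X → (E ≃L[ℂ] E)) (n : ℕ) (x y : X) :
    ((cocycle f A (n+1) y).symm : E →L[ℂ] E).comp (cocycle f A (n+1) x : E →L[ℂ] E)
      - ((cocycle f A n y).symm : E →L[ℂ] E).comp (cocycle f A n x : E →L[ℂ] E)
    = (((cocycle f A n y).symm : E →L[ℂ] E).comp
        (((A (f^[n] y)).symm : E →L[ℂ] E).comp
          ((A (f^[n] x) : E →L[ℂ] E) - (A (f^[n] y) : E →L[ℂ] E)))).comp
        (cocycle f A n x : E →L[ℂ] E) := by
  rw [cocycle_succ' f A n x, cocycle_succ' f A n y]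
  ext v
  simp [ContinuousLinearMap.comp_apply, map_sub, ContinuousLinearEquiv.symm_apply_apply]

lemma prod_one_add_le {r ε : ℝ} (hr0 : 0 ≤ r) (hr1 : r < 1) (hε : 0 ≤ ε) (n : ℕ) :
    ∏ k ∈ range n, (1 + ε * r ^ k) ≤ Real.exp (ε * (1 - r)⁻¹) := by
  calc ∏ k ∈ range n, (1 + ε * r ^ k)
      ≤ ∏ k ∈ range n, Real.exp (ε * r ^ k) := by
        refine prod_le_prod (fun k _ => by positivity) (fun k _ => ?_)
        simpa [add_comm] using Real.add_one_le_exp (ε * r ^ k)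
    _ = Real.exp (∑ k ∈ range n, ε * r ^ k) := (Real.exp_sum _ _).symm
    _ ≤ Real.exp (ε * (1 - r)⁻¹) := by
        apply Real.exp_le_exp.2
        rw [← mul_sum]
        refine mul_le_mul_of_nonneg_left ?_ hε
        calc ∑ k ∈ range n, r ^ k ≤ ∑' k : ℕ, r ^ k :=
              Summable.sum_le_tsum _ (fun k _ => by positivity) (summable_geometric_of_lt_one hr0 hr1)
          _ = (1 - r)⁻¹ := tsum_geometric_of_lt_one hr0 hr1

lemma rpow_nat_comm {θ : ℝ} (hθ : 0 ≤ θ) (ν : ℝ) (n : ℕ) :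
    ((θ ^ n : ℝ)) ^ ν = (θ ^ ν) ^ n := by
  rw [← Real.rpow_natCast θ n, ← Real.rpow_natCast (θ ^ ν) n, ← Real.rpow_mul hθ,
    ← Real.rpow_mul hθ, mul_comm]

end Aux


/-- **Proposition 7.2** (existence of stable holonomies for fiber-bunched cocycles).
Under the fiber-bunching conditions with constants `C, ν, θ, τ`, there are `Ĉ > 0` and
`τ̂ ∈ (0,1)` depending only on `d, C, ν, θ, τ, D` such that whenever `dist(x,y) ≤ D` and
`dist(fⁿx, fⁿy) ≤ θⁿ dist(x,y)` for all `n`, the maps `Hₙ = Aⁿ(y)⁻¹ ∘ Aⁿ(x)` satisfy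
`‖H_{n+1} − Hₙ‖ ≤ Ĉ τ̂ⁿ dist(x,y)^ν`; in particular they converge in operator norm. -/
theorem stmt8 (d : ℕ) (C ν θ τ D : ℝ)
    (hC : 0 < C) (hν0 : 0 < ν) (hν1 : ν ≤ 1)
    (hθ0 : 0 < θ) (hθ1 : θ < 1) (hτ0 : 0 < τ) (hτ1 : τ < 1) (hD : 0 < D) :
    ∃ Chat : ℝ, 0 < Chat ∧ ∃ τhat : ℝ, 0 < τhat ∧ τhat < 1 ∧
      ∀ (X : Type) [MetricSpace X],
      ∀ (f : X → X) (A : X → (EuclideanSpace ℂ (Fin d) ≃L[ℂ] EuclideanSpace ℂ (Fin d))),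
        (∀ x, ‖(A x : EuclideanSpace ℂ (Fin d) →L[ℂ] EuclideanSpace ℂ (Fin d))‖ ≤ C) →
        (∀ x, ‖((A x).symm : EuclideanSpace ℂ (Fin d) →L[ℂ] EuclideanSpace ℂ (Fin d))‖ ≤ C) →
        (∀ x y, ‖(A x : EuclideanSpace ℂ (Fin d) →L[ℂ] EuclideanSpace ℂ (Fin d))
            - (A y : EuclideanSpace ℂ (Fin d) →L[ℂ] EuclideanSpace ℂ (Fin d))‖
            ≤ C * dist x y ^ ν) →
        (∀ x, ‖(A x : EuclideanSpace ℂ (Fin d) →L[ℂ] EuclideanSpace ℂ (Fin d))‖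
            * ‖((A x).symm : EuclideanSpace ℂ (Fin d) →L[ℂ] EuclideanSpace ℂ (Fin d))‖
            * θ ^ ν < τ) →
        ∀ x y : X, dist x y ≤ D →
          (∀ n : ℕ, dist (f^[n] x) (f^[n] y) ≤ θ ^ n * dist x y) →
          (∀ n : ℕ,
            ‖(((cocycle f A (n + 1) y).symm : EuclideanSpace ℂ (Fin d) →L[ℂ] EuclideanSpace ℂ (Fin d)).comp
                (cocycle f A (n + 1) x : EuclideanSpace ℂ (Fin d) →L[ℂ] EuclideanSpace ℂ (Fin d)))
              - (((cocycle f A n y).symm : EuclideanSpace ℂ (Fin d) →L[ℂ] EuclideanSpace ℂ (Fin d)).comp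
                (cocycle f A n x : EuclideanSpace ℂ (Fin d) →L[ℂ] EuclideanSpace ℂ (Fin d)))‖
              ≤ Chat * τhat ^ n * dist x y ^ ν) ∧
          ∃ L : EuclideanSpace ℂ (Fin d) →L[ℂ] EuclideanSpace ℂ (Fin d),
            Tendsto (fun n : ℕ =>
                (((cocycle f A n y).symm : EuclideanSpace ℂ (Fin d) →L[ℂ] EuclideanSpace ℂ (Fin d)).comp
                  (cocycle f A n x : EuclideanSpace ℂ (Fin d) →L[ℂ] EuclideanSpace ℂ (Fin d))))
              atTop (nhds L) := by
  classical
  set E := EuclideanSpace ℂ (Fin d) with hE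
  set r : ℝ := θ ^ ν with hr
  have hr0 : 0 < r := Real.rpow_pos_of_pos hθ0 ν
  have hr1 : r < 1 := Real.rpow_lt_one hθ0.le hθ1 hν0
  set ε : ℝ := C ^ 2 * D ^ ν with hε
  have hε0 : 0 ≤ ε := by positivity
  set K : ℝ := Real.exp (ε * (1 - r)⁻¹) with hK
  have hK0 : 0 < K := Real.exp_pos _
  refine ⟨C ^ 2 * K, by positivity, τ, hτ0, hτ1, ?_⟩
  intro X _ f A hAn hAin hHol hbun x y hxy horb
  have hdν : (0:ℝ) ≤ dist x y ^ ν := Real.rpow_nonneg dist_nonneg ν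
  have key : ∀ n : ℕ,
      ‖(((cocycle f A (n + 1) y).symm : E →L[ℂ] E).comp (cocycle f A (n + 1) x : E →L[ℂ] E))
        - (((cocycle f A n y).symm : E →L[ℂ] E).comp (cocycle f A n x : E →L[ℂ] E))‖
        ≤ C ^ 2 * K * τ ^ n * dist x y ^ ν := by
    rcases subsingleton_or_nontrivial E with hsub | hnt
    · intro n
      have h0 : ∀ T : E →L[ℂ] E, ‖T‖ = 0 := fun T => by
        rw [Subsingleton.elim T 0, norm_zero]
      rw [h0]
      positivity
    intro n
    -- abbreviations
    set Pn : E →L[ℂ] E := (cocycle f A n x : E →L[ℂ] E) with hPn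
    set Qn : E →L[ℂ] E := ((cocycle f A n y).symm : E →L[ℂ] E) with hQn
    -- per-point norms
    have haC : ∀ z : X, ‖(A z : E →L[ℂ] E)‖ ≤ C := hAn
    have hbC : ∀ z : X, ‖((A z).symm : E →L[ℂ] E)‖ ≤ C := hAin
    have hab : ∀ z : X, (1:ℝ) ≤ ‖(A z : E →L[ℂ] E)‖ * ‖((A z).symm : E →L[ℂ] E)‖ := by
      intro z
      have := ContinuousLinearMap.opNorm_comp_le (A z : E →L[ℂ] E) ((A z).symm : E →L[ℂ] E)
      rw [ContinuousLinearEquiv.coe_comp_coe_symm, ContinuousLinearMap.norm_id] at this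
      exact this
    -- distance bound on iterates, rpow form
    have hdist_pow : ∀ k : ℕ, dist (f^[k] x) (f^[k] y) ^ ν ≤ r ^ k * dist x y ^ ν := by
      intro k
      calc dist (f^[k] x) (f^[k] y) ^ ν ≤ (θ ^ k * dist x y) ^ ν :=
            Real.rpow_le_rpow dist_nonneg (horb k) hν0.le
        _ = (θ ^ k) ^ ν * dist x y ^ ν := Real.mul_rpow (by positivity) dist_nonneg
        _ = r ^ k * dist x y ^ ν := by rw [rpow_nat_comm hθ0.le ν k]
    -- Hölder bound along iterates
    have hHolk : ∀ k : ℕ, ‖(A (f^[k] x) : E →L[ℂ] E) - (A (f^[k] y) : E →L[ℂ] E)‖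
        ≤ C * (r ^ k * dist x y ^ ν) := by
      intro k
      calc ‖(A (f^[k] x) : E →L[ℂ] E) - (A (f^[k] y) : E →L[ℂ] E)‖
          ≤ C * dist (f^[k] x) (f^[k] y) ^ ν := hHol _ _
        _ ≤ C * (r ^ k * dist x y ^ ν) := by
            exact mul_le_mul_of_nonneg_left (hdist_pow k) hC.le
    -- norm of A on x-iterates is controlled by that on y-iterates
    have hax : ∀ k : ℕ, ‖(A (f^[k] x) : E →L[ℂ] E)‖
        ≤ ‖(A (f^[k] y) : E →L[ℂ] E)‖ * (1 + ε * r ^ k) := by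
      intro k
      have h1 : ‖(A (f^[k] x) : E →L[ℂ] E)‖
          ≤ ‖(A (f^[k] y) : E →L[ℂ] E)‖ + C * (r ^ k * dist x y ^ ν) := by
        calc ‖(A (f^[k] x) : E →L[ℂ] E)‖
            ≤ ‖(A (f^[k] y) : E →L[ℂ] E)‖
              + ‖(A (f^[k] x) : E →L[ℂ] E) - (A (f^[k] y) : E →L[ℂ] E)‖ := by
              have := norm_sub_norm_le (A (f^[k] x) : E →L[ℂ] E) (A (f^[k] y) : E →L[ℂ] E)
              linarith
          _ ≤ _ := by linarith [hHolk k]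
      have ha1 : (1:ℝ) ≤ C * ‖(A (f^[k] y) : E →L[ℂ] E)‖ := by
        calc (1:ℝ) ≤ ‖(A (f^[k] y) : E →L[ℂ] E)‖ * ‖((A (f^[k] y)).symm : E →L[ℂ] E)‖ :=
              hab _
          _ ≤ ‖(A (f^[k] y) : E →L[ℂ] E)‖ * C :=
              mul_le_mul_of_nonneg_left (hbC _) (norm_nonneg _)
          _ = C * ‖(A (f^[k] y) : E →L[ℂ] E)‖ := mul_comm _ _
      have hdD : dist x y ^ ν ≤ D ^ ν := Real.rpow_le_rpow dist_nonneg hxy hν0.le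
      have h2 : C * (r ^ k * dist x y ^ ν) ≤ ‖(A (f^[k] y) : E →L[ℂ] E)‖ * (ε * r ^ k) := by
        have hrk : (0:ℝ) ≤ r ^ k := by positivity
        calc C * (r ^ k * dist x y ^ ν) ≤ C * (r ^ k * D ^ ν) := by
              refine mul_le_mul_of_nonneg_left (mul_le_mul_of_nonneg_left hdD hrk) hC.le
          _ ≤ (C * ‖(A (f^[k] y) : E →L[ℂ] E)‖) * (C * (r ^ k * D ^ ν)) := by
              nlinarith [ha1, mul_nonneg hC.le (mul_nonneg hrk (by positivity : (0:ℝ) ≤ D ^ ν))]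
          _ = ‖(A (f^[k] y) : E →L[ℂ] E)‖ * (ε * r ^ k) := by rw [hε]; ring
      calc ‖(A (f^[k] x) : E →L[ℂ] E)‖
          ≤ ‖(A (f^[k] y) : E →L[ℂ] E)‖ + C * (r ^ k * dist x y ^ ν) := h1
        _ ≤ ‖(A (f^[k] y) : E →L[ℂ] E)‖ + ‖(A (f^[k] y) : E →L[ℂ] E)‖ * (ε * r ^ k) := by
            linarith [h2]
        _ = ‖(A (f^[k] y) : E →L[ℂ] E)‖ * (1 + ε * r ^ k) := by ring
    -- product bounds
    have hP : ‖Pn‖ ≤ ∏ k ∈ range n, (‖(A (f^[k] y) : E →L[ℂ] E)‖ * (1 + ε * r ^ k)) := by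
      refine (norm_cocycle_le f A x n).trans ?_
      exact prod_le_prod (fun k _ => norm_nonneg _) (fun k _ => hax k)
    have hQ : ‖Qn‖ ≤ ∏ k ∈ range n, ‖((A (f^[k] y)).symm : E →L[ℂ] E)‖ :=
      norm_symm_cocycle_le f A y n
    have hQP : ‖Qn‖ * ‖Pn‖ ≤ (τ / r) ^ n * K := by
      calc ‖Qn‖ * ‖Pn‖
          ≤ (∏ k ∈ range n, ‖((A (f^[k] y)).symm : E →L[ℂ] E)‖)
            * ∏ k ∈ range n, (‖(A (f^[k] y) : E →L[ℂ] E)‖ * (1 + ε * r ^ k)) := by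
            refine mul_le_mul hQ hP (norm_nonneg _) (prod_nonneg fun k _ => norm_nonneg _)
        _ = ∏ k ∈ range n, (‖((A (f^[k] y)).symm : E →L[ℂ] E)‖
              * (‖(A (f^[k] y) : E →L[ℂ] E)‖ * (1 + ε * r ^ k))) := by
            rw [← prod_mul_distrib]
        _ ≤ ∏ k ∈ range n, (τ / r * (1 + ε * r ^ k)) := by
            refine prod_le_prod (fun k _ => by positivity) (fun k _ => ?_)
            have hbk : ‖(A (f^[k] y) : E →L[ℂ] E)‖ * ‖((A (f^[k] y)).symm : E →L[ℂ] E)‖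
                ≤ τ / r := by
              rw [le_div_iff₀ hr0]
              exact (hbun (f^[k] y)).le
            have h1k : (0:ℝ) ≤ 1 + ε * r ^ k := by positivity
            calc ‖((A (f^[k] y)).symm : E →L[ℂ] E)‖
                  * (‖(A (f^[k] y) : E →L[ℂ] E)‖ * (1 + ε * r ^ k))
                = (‖(A (f^[k] y) : E →L[ℂ] E)‖ * ‖((A (f^[k] y)).symm : E →L[ℂ] E)‖)
                  * (1 + ε * r ^ k) := by ring
              _ ≤ τ / r * (1 + ε * r ^ k) := mul_le_mul_of_nonneg_right hbk h1k
        _ = (τ / r) ^ n * ∏ k ∈ range n, (1 + ε * r ^ k) := by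
            rw [prod_mul_distrib, prod_const, card_range]
        _ ≤ (τ / r) ^ n * K := by
            refine mul_le_mul_of_nonneg_left (prod_one_add_le hr0.le hr1 hε0 n) (by positivity)
    -- assemble
    rw [diff_eq f A n x y]
    have hmid : ‖((A (f^[n] y)).symm : E →L[ℂ] E).comp
        ((A (f^[n] x) : E →L[ℂ] E) - (A (f^[n] y) : E →L[ℂ] E))‖
        ≤ C * (C * (r ^ n * dist x y ^ ν)) := by
      calc ‖((A (f^[n] y)).symm : E →L[ℂ] E).comp
            ((A (f^[n] x) : E →L[ℂ] E) - (A (f^[n] y) : E →L[ℂ] E))‖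
          ≤ ‖((A (f^[n] y)).symm : E →L[ℂ] E)‖
            * ‖(A (f^[n] x) : E →L[ℂ] E) - (A (f^[n] y) : E →L[ℂ] E)‖ :=
            ContinuousLinearMap.opNorm_comp_le _ _
        _ ≤ C * (C * (r ^ n * dist x y ^ ν)) := by
            refine mul_le_mul (hbC _) (hHolk n) (norm_nonneg _) hC.le
    calc ‖(Qn.comp (((A (f^[n] y)).symm : E →L[ℂ] E).comp
            ((A (f^[n] x) : E →L[ℂ] E) - (A (f^[n] y) : E →L[ℂ] E)))).comp Pn‖
        ≤ ‖Qn.comp (((A (f^[n] y)).symm : E →L[ℂ] E).comp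
            ((A (f^[n] x) : E →L[ℂ] E) - (A (f^[n] y) : E →L[ℂ] E)))‖ * ‖Pn‖ :=
          ContinuousLinearMap.opNorm_comp_le _ _
      _ ≤ (‖Qn‖ * ‖((A (f^[n] y)).symm : E →L[ℂ] E).comp
            ((A (f^[n] x) : E →L[ℂ] E) - (A (f^[n] y) : E →L[ℂ] E))‖) * ‖Pn‖ := by
          exact mul_le_mul_of_nonneg_right (ContinuousLinearMap.opNorm_comp_le _ _)
            (norm_nonneg _)
      _ ≤ (‖Qn‖ * (C * (C * (r ^ n * dist x y ^ ν)))) * ‖Pn‖ := by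
          refine mul_le_mul_of_nonneg_right
            (mul_le_mul_of_nonneg_left hmid (norm_nonneg _)) (norm_nonneg _)
      _ = (‖Qn‖ * ‖Pn‖) * (C ^ 2 * (r ^ n * dist x y ^ ν)) := by ring
      _ ≤ ((τ / r) ^ n * K) * (C ^ 2 * (r ^ n * dist x y ^ ν)) := by
          refine mul_le_mul_of_nonneg_right hQP (by positivity)
      _ = C ^ 2 * K * ((τ / r) ^ n * r ^ n) * dist x y ^ ν := by ring
      _ = C ^ 2 * K * τ ^ n * dist x y ^ ν := by
          rw [← mul_pow, div_mul_cancel₀ _ hr0.ne']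
  refine ⟨key, ?_⟩
  have hcauchy : CauchySeq (fun n : ℕ =>
      ((cocycle f A n y).symm : E →L[ℂ] E).comp (cocycle f A n x : E →L[ℂ] E)) := by
    apply cauchySeq_of_le_geometric τ (C ^ 2 * K * dist x y ^ ν) hτ1
    intro n
    rw [dist_eq_norm, norm_sub_rev]
    calc _ ≤ C ^ 2 * K * τ ^ n * dist x y ^ ν := key n
      _ = C ^ 2 * K * dist x y ^ ν * τ ^ n := by ring
  exact cauchySeq_tendsto_of_complete hcauchy
end

section
/- Let Σ = ℕ^ℕ with the product topology (ℕ discrete) and its Borel σ-algebra. Let (μ_x)_{x∈Σ} be a family of Borel probability measures on Σ such that: (i) there is a constant K ≥ 1 with μ_x(E) ≤ K·μ_y(E) for all x, y ∈ Σ and all Borel sets E ⊆ Σ; and (ii) for every bounded Borel measurable φ : Σ → ℝ, the map x ↦ ∫ φ dμ_x is continuous on Σ. Let Φ : Σ × Σ → ℝ be bounded and jointly Borel measurable, let z ∈ Σ, and assume that for every s ∈ Σ the function x ↦ Φ(s,x) is continuous at z. Then the function x ↦ ∫_Σ Φ(s,x) dμ_x(s) is continuous at z. -/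
/-!
Write `∫ Φ(s,x) dμ_x = ∫ Φ(s,z) dμ_x + ∫ (Φ(s,x) - Φ(s,z)) dμ_x`. The first term is continuous
in `x` by hypothesis (ii). Since `μ_x ≤ K μ_z`, the second term is bounded by
`K ∫ |Φ(s,x) - Φ(s,z)| dμ_z`, which tends to `0` as `x → z` by dominated convergence for the
single measure `μ_z`.
-/

open MeasureTheory Filter Topology
open scoped ENNReal

namespace MeasureTheory

variable {α : Type*} [MeasurableSpace α]

theorem integral_le_toReal_mul_of_le_smul {μ ν : Measure α} {c : ℝ≥0∞} (hc : c ≠ ∞)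
    (hμν : μ ≤ c • ν) {f : α → ℝ} (hf : 0 ≤ f) (hfi : Integrable f ν) :
    ∫ s, f s ∂μ ≤ c.toReal * ∫ s, f s ∂ν :=
  (integral_mono_measure hμν (ae_of_all _ hf) (hfi.smul_measure hc)).trans_eq
    (integral_smul_measure f c)

variable {X E : Type*} [TopologicalSpace X] [FirstCountableTopology X]
  [NormedAddCommGroup E] [NormedSpace ℝ E]

theorem continuousAt_integral_of_le_smul {μ : X → Measure α} {z : X} [IsFiniteMeasure (μ z)]
    {c : ℝ≥0∞} (hc : c ≠ ∞) (hμ : ∀ x, μ x ≤ c • μ z)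
    {f : X → α → E} (hfm : ∀ x, StronglyMeasurable (f x)) {C : ℝ} (hfC : ∀ x s, ‖f x s‖ ≤ C)
    (hfz : ∀ s, ContinuousAt (fun x => f x s) z)
    (hcont : ContinuousAt (fun x => ∫ s, f z s ∂μ x) z) :
    ContinuousAt (fun x => ∫ s, f x s ∂μ x) z := by
  have hint : ∀ x y, Integrable (f y) (μ x) := fun x y =>
    ((Integrable.of_bound (hfm y).aestronglyMeasurable C (ae_of_all _ (hfC y))).smul_measure
      hc).mono_measure (hμ x)
  have hdist : ContinuousAt (fun x => ∫ s, ‖f x s - f z s‖ ∂μ z) z :=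
    continuousAt_of_dominated (bound := fun _ => C + C)
      (Eventually.of_forall fun x => ((hfm x).sub (hfm z)).norm.aestronglyMeasurable)
      (Eventually.of_forall fun x => ae_of_all _ fun s => by
        rw [norm_norm]; exact (norm_sub_le _ _).trans (add_le_add (hfC x s) (hfC z s)))
      (integrable_const _)
      (ae_of_all _ fun s => ((hfz s).sub continuousAt_const).norm)
  have hdist_zero : Tendsto (fun x => ∫ s, ‖f x s - f z s‖ ∂μ z) (𝓝 z) (𝓝 0) := by
    simpa [ContinuousAt] using hdist
  have hdiff : Tendsto (fun x => ∫ s, f x s ∂μ x - ∫ s, f z s ∂μ x) (𝓝 z) (𝓝 0) := by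
    refine squeeze_zero_norm (fun x => ?_) (by simpa using hdist_zero.const_mul c.toReal)
    calc ‖∫ s, f x s ∂μ x - ∫ s, f z s ∂μ x‖
        = ‖∫ s, f x s - f z s ∂μ x‖ := by rw [integral_sub (hint x x) (hint x z)]
      _ ≤ ∫ s, ‖f x s - f z s‖ ∂μ x := norm_integral_le_integral_norm _
      _ ≤ c.toReal * ∫ s, ‖f x s - f z s‖ ∂μ z :=
          integral_le_toReal_mul_of_le_smul hc (hμ x) (fun s => norm_nonneg _)
            ((hint z x).sub (hint z z)).norm
  simpa [ContinuousAt] using hdiff.add hcont.tendsto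

end MeasureTheory

theorem stmt9_general (μ : (ℕ → ℕ) → Measure (ℕ → ℕ))
    (hprob : ∀ x, IsProbabilityMeasure (μ x))
    (K : ℝ)
    (hdom : ∀ x y : ℕ → ℕ, ∀ E : Set (ℕ → ℕ), MeasurableSet E →
      μ x E ≤ ENNReal.ofReal K * μ y E)
    (hcont : ∀ φ : (ℕ → ℕ) → ℝ, Measurable φ → (∃ Cb : ℝ, ∀ s, |φ s| ≤ Cb) →
      Continuous fun x => ∫ s, φ s ∂(μ x))
    (Φ : (ℕ → ℕ) × (ℕ → ℕ) → ℝ) (hΦm : Measurable Φ)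
    (hΦb : ∃ Cb : ℝ, ∀ p, |Φ p| ≤ Cb)
    (z : ℕ → ℕ) (hΦc : ∀ s : ℕ → ℕ, ContinuousAt (fun x => Φ (s, x)) z) :
    ContinuousAt (fun x => ∫ s, Φ (s, x) ∂(μ x)) z := by
  obtain ⟨C, hC⟩ := hΦb
  have hΦslice : ∀ x, Measurable fun s => Φ (s, x) := fun x => hΦm.comp measurable_prodMk_right
  exact continuousAt_integral_of_le_smul ENNReal.ofReal_ne_top
    (fun x => Measure.le_iff.2 fun E hE => hdom x z E hE)
    (f := fun x s => Φ (s, x)) (fun x => (hΦslice x).stronglyMeasurable) (fun x s => hC (s, x))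
    hΦc ((hcont _ (hΦslice z) ⟨C, fun s => hC (s, z)⟩).continuousAt)

/-- **Lemma 2.8.** Let `(μ_x)` be a family of Borel probabilities on `Σ = ℕ^ℕ` with
uniformly comparable measures (`μ_x(E) ≤ K μ_y(E)`) whose integrals of bounded measurable
functions depend continuously on the base point. If `Φ : Σ × Σ → ℝ` is bounded measurable
and, for each fixed first variable, continuous at `z` in the second variable, then
`x ↦ ∫ Φ(s,x) dμ_x(s)` is continuous at `z`. -/
theorem stmt9 (μ : (ℕ → ℕ) → Measure (ℕ → ℕ))
    (hprob : ∀ x, IsProbabilityMeasure (μ x))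
    (K : ℝ) (hK : 1 ≤ K)
    (hdom : ∀ x y : ℕ → ℕ, ∀ E : Set (ℕ → ℕ), MeasurableSet E →
      μ x E ≤ ENNReal.ofReal K * μ y E)
    (hcont : ∀ φ : (ℕ → ℕ) → ℝ, Measurable φ → (∃ Cb : ℝ, ∀ s, |φ s| ≤ Cb) →
      Continuous fun x => ∫ s, φ s ∂(μ x))
    (Φ : (ℕ → ℕ) × (ℕ → ℕ) → ℝ) (hΦm : Measurable Φ)
    (hΦb : ∃ Cb : ℝ, ∀ p, |Φ p| ≤ Cb)
    (z : ℕ → ℕ) (hΦc : ∀ s : ℕ → ℕ, ContinuousAt (fun x => Φ (s, x)) z) :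
    ContinuousAt (fun x => ∫ s, Φ (s, x) ∂(μ x)) z :=
  stmt9_general μ hprob K hdom hcont Φ hΦm hΦb z hΦc
end

section
/- Let Σ = ℕ^ℕ, let σ : Σ → Σ be the one-sided shift, let μ be a σ-invariant ergodic Borel probability measure on Σ, and let Jσ be a Jacobian of μ for σ. Assume the uniform bounded-distortion condition: there is K ≥ 1 such that Jσ^k(c_w x) ≤ K·Jσ^k(c_w y) for every k ≥ 1, every word w of length k, and all x, y ∈ Σ. For k ≥ 0, x ∈ Σ and a Borel set E ⊆ Σ define the backward average μ_{k,x}(E) = Σ_w Jσ^k(c_w x)^{−1}·1_E(c_w x), the sum running over all words w of length k. Then for every x ∈ Σ and every cylinder C = [w₀]: K·μ(C) ≥ limsup_{n→∞} (1/n) Σ_{k=0}^{n−1} μ_{k,x}(C) ≥ liminf_{n→∞} (1/n) Σ_{k=0}^{n−1} μ_{k,x}(C) ≥ (1/K)·μ(C). -/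
/-!
Write `L^k g (x) = ∑_w Jσ^k(c_w x)⁻¹ g(c_w x)`, so that `μ_{k,x}(E) = L^k 1_E (x)`. The Jacobian
identity says exactly that `L` preserves `μ`-integrals, hence `∫ L^k 1_C dμ = μ(C)` for all `k`.
Once `k` is at least the length of the word defining `C`, `1_C ∘ c_w` is constant for each `w`,
so bounded distortion gives `L^k 1_C (x) ≤ K · L^k 1_C (y)` for all `x, y`; integrating in `y`
(resp. `x`) yields `K⁻¹ μ(C) ≤ μ_{k,x}(C) ≤ K μ(C)` for all large `k`, and Cesàro means inherit
eventual bounds.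
-/

open MeasureTheory Filter

/-- The one-sided shift on `Σ = ℕ^ℕ`. -/
def shiftMap : (ℕ → ℕ) → (ℕ → ℕ) := fun x n => x (n + 1)

/-- The cylinder `[w]` of a word `w` of length `k`. -/
def cylinder {k : ℕ} (w : Fin k → ℕ) : Set (ℕ → ℕ) :=
  {x | ∀ j : Fin k, x (j : ℕ) = w j}

/-- The inverse branch `c_w : Σ → [w]` of `σ^k` associated to a word `w` of length `k`. -/
def branch {k : ℕ} (w : Fin k → ℕ) (x : ℕ → ℕ) : ℕ → ℕ :=
  fun j => if h : j < k then w ⟨j, h⟩ else x (j - k)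

/-- `Jσ^n(z) = ∏_{i<n} Jσ(σ^i z)`. -/
def jprod (J : (ℕ → ℕ) → ℝ) (n : ℕ) (z : ℕ → ℕ) : ℝ :=
  ∏ i ∈ Finset.range n, J (shiftMap^[i] z)

/-- The backward average `μ_{k,x}(E) = ∑_w Jσ^k(c_w x)⁻¹ 1_E(c_w x)`, summed over all
words `w` of length `k`. -/
noncomputable def backAvg (J : (ℕ → ℕ) → ℝ) (k : ℕ) (x : ℕ → ℕ) (E : Set (ℕ → ℕ)) : ℝ :=
  ∑' w : Fin k → ℕ, (jprod J k (branch w x))⁻¹ * E.indicator (fun _ => (1 : ℝ)) (branch w x)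

open scoped ENNReal Topology

noncomputable def cesaroMean (b : ℕ → ℝ) (n : ℕ) : ℝ :=
  (1 / (n : ℝ)) * ∑ k ∈ Finset.range n, b k

lemma cesaroMean_mono {b c : ℕ → ℝ} (h : b ≤ c) : cesaroMean b ≤ cesaroMean c := fun n =>
  mul_le_mul_of_nonneg_left (Finset.sum_le_sum fun k _ => h k) (by positivity)

lemma tendsto_cesaroMean {b : ℕ → ℝ} {l : ℝ} (h : Tendsto b atTop (𝓝 l)) :
    Tendsto (cesaroMean b) atTop (𝓝 l) :=
  h.cesaro.congr fun n => by rw [cesaroMean, one_div]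

lemma tendsto_cesaroMean_ite (b : ℕ → ℝ) (m : ℕ) (c : ℝ) :
    Tendsto (cesaroMean fun k => if k < m then b k else c) atTop (𝓝 c) :=
  tendsto_cesaroMean <| tendsto_const_nhds.congr' <|
    eventually_atTop.2 ⟨m, fun k hk => by simp [not_lt.2 hk]⟩

/-- Squeeze the Cesàro means of `b` between those of the sequences that agree with `b` up to
the index from which `lo ≤ b ≤ hi`, and equal `lo`, resp. `hi`, afterwards. -/
lemma limsup_cesaroMean_le_and_le_liminf {b : ℕ → ℝ} {lo hi : ℝ}
    (h : ∀ᶠ k in atTop, lo ≤ b k ∧ b k ≤ hi) :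
    limsup (cesaroMean b) atTop ≤ hi ∧
      liminf (cesaroMean b) atTop ≤ limsup (cesaroMean b) atTop ∧
      lo ≤ liminf (cesaroMean b) atTop := by
  obtain ⟨m, hm⟩ := eventually_atTop.1 h
  have hlo := tendsto_cesaroMean_ite b m lo
  have hhi := tendsto_cesaroMean_ite b m hi
  have hle_hi : cesaroMean b ≤ cesaroMean fun k => if k < m then b k else hi :=
    cesaroMean_mono fun k => by split_ifs with hk; exacts [le_rfl, (hm k (not_lt.1 hk)).2]
  have hlo_le : (cesaroMean fun k => if k < m then b k else lo) ≤ cesaroMean b :=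
    cesaroMean_mono fun k => by split_ifs with hk; exacts [le_rfl, (hm k (not_lt.1 hk)).1]
  have hbdd_above : IsBoundedUnder (· ≤ ·) atTop (cesaroMean b) :=
    hhi.isBoundedUnder_le.mono_le (.of_forall hle_hi)
  have hbdd_below : IsBoundedUnder (· ≥ ·) atTop (cesaroMean b) :=
    hlo.isBoundedUnder_ge.mono_ge (.of_forall hlo_le)
  refine ⟨?_, liminf_le_limsup hbdd_above hbdd_below, ?_⟩
  · exact hhi.limsup_eq ▸ limsup_le_limsup (.of_forall hle_hi)
      hbdd_below.isCoboundedUnder_le hhi.isBoundedUnder_le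
  · exact hlo.liminf_eq ▸ liminf_le_liminf (.of_forall hlo_le)
      hlo.isBoundedUnder_ge hbdd_above.isCoboundedUnder_ge

lemma branch_zero (w : Fin 0 → ℕ) (x : ℕ → ℕ) : branch w x = x := by
  funext j; simp [branch]

lemma shiftMap_branch_one (ι : ℕ) (x : ℕ → ℕ) : shiftMap (branch (fun _ : Fin 1 => ι) x) = x := by
  funext j; simp [shiftMap, branch]

lemma branch_one_shiftMap {ι : ℕ} {x : ℕ → ℕ} (hx : x 0 = ι) :
    branch (fun _ : Fin 1 => ι) (shiftMap x) = x := by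
  funext j
  rcases j with _ | j
  · simp [branch, hx]
  · simp [branch, shiftMap]

lemma branch_cons {k : ℕ} (ι : ℕ) (w : Fin k → ℕ) (x : ℕ → ℕ) :
    branch (Fin.cons ι w) x = branch (fun _ : Fin 1 => ι) (branch w x) := by
  funext j
  rcases j with _ | j
  · simp [branch]
  · by_cases h : j < k
    · simp [branch, h]
      exact Fin.cons_succ (α := fun _ => ℕ) ι w ⟨j, h⟩
    · simp [branch, h]

@[fun_prop]
lemma measurable_shiftMap : Measurable shiftMap :=
  measurable_pi_lambda _ fun n => measurable_pi_apply (n + 1)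

@[fun_prop]
lemma measurable_branch {k : ℕ} (w : Fin k → ℕ) : Measurable (branch w) := by
  refine measurable_pi_lambda _ fun j => ?_
  by_cases h : j < k
  · simp [branch, h]
  · simpa [branch, h] using measurable_pi_apply (j - k)

lemma measurableSet_cylinder {k : ℕ} (w : Fin k → ℕ) : MeasurableSet (cylinder w) := by
  have : cylinder w = ⋂ j : Fin k, (fun x : ℕ → ℕ => x j) ⁻¹' {w j} := by
    ext x; simp [_root_.cylinder]
  rw [this]
  exact .iInter fun j => measurable_pi_apply _ (measurableSet_singleton _)

lemma branch_mem_cylinder_iff {k₀ k : ℕ} (w₀ : Fin k₀ → ℕ) (w : Fin k → ℕ) (hk : k₀ ≤ k)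
    (x y : ℕ → ℕ) : branch w x ∈ cylinder w₀ ↔ branch w y ∈ cylinder w₀ := by
  have h (j : Fin k₀) : (j : ℕ) < k := j.2.trans_le hk
  simp [_root_.cylinder, branch, h]

lemma measurable_jprod {J : (ℕ → ℕ) → ℝ} (hJ : Measurable J) (k : ℕ) :
    Measurable (jprod J k) :=
  Finset.measurable_prod _ fun i _ => hJ.comp (measurable_shiftMap.iterate i)

lemma jprod_pos {J : (ℕ → ℕ) → ℝ} (hJ : ∀ x, 0 < J x) (k : ℕ) (x : ℕ → ℕ) :
    0 < jprod J k x :=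
  Finset.prod_pos fun _ _ => hJ _

lemma jprod_one (J : (ℕ → ℕ) → ℝ) (x : ℕ → ℕ) : jprod J 1 x = J x := by
  simp [jprod]

lemma jprod_succ (J : (ℕ → ℕ) → ℝ) (k : ℕ) (x : ℕ → ℕ) :
    jprod J (k + 1) x = jprod J k (shiftMap x) * J x := by
  simp [jprod, Finset.prod_range_succ', Function.iterate_succ_apply]

def IsShiftJacobian (μ : Measure (ℕ → ℕ)) (J : (ℕ → ℕ) → ℝ) : Prop :=
  ∀ (ι : ℕ) (B : Set (ℕ → ℕ)), MeasurableSet B →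
    μ B = ∫⁻ x in {y : ℕ → ℕ | y 0 = ι} ∩ shiftMap ⁻¹' B, ENNReal.ofReal (J x) ∂μ

def HasBoundedDistortion (J : (ℕ → ℕ) → ℝ) (K : ℝ) : Prop :=
  ∀ k : ℕ, 1 ≤ k → ∀ w : Fin k → ℕ, ∀ x y : ℕ → ℕ,
    jprod J k (branch w x) ≤ K * jprod J k (branch w y)

noncomputable def transferOp (J : (ℕ → ℕ) → ℝ) (k : ℕ) (g : (ℕ → ℕ) → ℝ≥0∞) (x : ℕ → ℕ) :
    ℝ≥0∞ :=
  ∑' w : Fin k → ℕ, (ENNReal.ofReal (jprod J k (branch w x)))⁻¹ * g (branch w x)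

section transferOp

variable {J : (ℕ → ℕ) → ℝ} {g : (ℕ → ℕ) → ℝ≥0∞}

lemma measurable_transferOp (hJ : Measurable J) (k : ℕ) (hg : Measurable g) :
    Measurable (transferOp J k g) :=
  .tsum fun w => ((ENNReal.measurable_ofReal.comp
    ((measurable_jprod hJ k).comp (measurable_branch w))).inv).mul (hg.comp (measurable_branch w))

lemma transferOp_zero : transferOp J 0 g = g := by
  funext x
  simp [transferOp, jprod, branch_zero]

lemma transferOp_one (x : ℕ → ℕ) :
    transferOp J 1 g x = ∑' ι : ℕ, (ENNReal.ofReal (J (branch (fun _ : Fin 1 => ι) x)))⁻¹ *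
      g (branch (fun _ : Fin 1 => ι) x) := by
  rw [transferOp, ← (Equiv.funUnique (Fin 1) ℕ).symm.tsum_eq]
  simp only [jprod_one]
  rfl

lemma transferOp_succ (hJ : ∀ x, 0 < J x) (k : ℕ) :
    transferOp J (k + 1) g = transferOp J k (transferOp J 1 g) := by
  funext x
  conv_rhs => rw [transferOp]; simp only [transferOp_one]
  rw [transferOp, ← (Fin.consEquiv fun _ => ℕ).tsum_eq, ENNReal.tsum_prod', ENNReal.tsum_comm]
  refine tsum_congr fun w => ?_
  rw [← ENNReal.tsum_mul_left]
  refine tsum_congr fun ι => ?_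
  have hP := jprod_pos hJ k (branch w x)
  rw [show Fin.consEquiv (fun _ => ℕ) (ι, w) = Fin.cons ι w from rfl, branch_cons, jprod_succ,
    shiftMap_branch_one, ENNReal.ofReal_mul hP.le,
    ENNReal.mul_inv (.inl (ENNReal.ofReal_pos.2 hP).ne') (.inl ENNReal.ofReal_ne_top), mul_assoc]

end transferOp

namespace IsShiftJacobian

variable {μ : Measure (ℕ → ℕ)} {J : (ℕ → ℕ) → ℝ}

lemma map_withDensity_eq (hJac : IsShiftJacobian μ J) (ι : ℕ) :
    ((μ.restrict {y | y 0 = ι}).withDensity fun x => ENNReal.ofReal (J x)).map shiftMap = μ := by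
  ext B hB
  rw [Measure.map_apply measurable_shiftMap hB, withDensity_apply _ (measurable_shiftMap hB),
    Measure.restrict_restrict (measurable_shiftMap hB), Set.inter_comm, ← hJac ι B hB]

lemma lintegral_transferOp_one (hJac : IsShiftJacobian μ J) (hJmeas : Measurable J)
    (hJpos : ∀ x, 0 < J x) {g : (ℕ → ℕ) → ℝ≥0∞} (hg : Measurable g) :
    ∫⁻ x, transferOp J 1 g x ∂μ = ∫⁻ x, g x ∂μ := by
  set c : ℕ → (ℕ → ℕ) → (ℕ → ℕ) := fun ι => branch fun _ : Fin 1 => ι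
  have hA (ι : ℕ) : MeasurableSet {y : ℕ → ℕ | y 0 = ι} :=
    measurableSet_eq_fun (measurable_pi_apply 0) measurable_const
  have hterm (ι : ℕ) : Measurable fun x => (ENNReal.ofReal (J (c ι x)))⁻¹ * g (c ι x) := by
    fun_prop
  have hsymbol (ι : ℕ) :
      ∫⁻ x, (ENNReal.ofReal (J (c ι x)))⁻¹ * g (c ι x) ∂μ = ∫⁻ x in {y | y 0 = ι}, g x ∂μ := by
    conv_lhs => rw [← hJac.map_withDensity_eq ι]
    rw [lintegral_map (hterm ι) measurable_shiftMap,
      lintegral_withDensity_eq_lintegral_mul _ (by fun_prop) (by fun_prop)]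
    refine setLIntegral_congr_fun (hA ι) fun x hx => ?_
    simp only [Pi.mul_apply, c, branch_one_shiftMap hx]
    rw [← mul_assoc, ENNReal.mul_inv_cancel (ENNReal.ofReal_pos.2 (hJpos x)).ne'
      ENNReal.ofReal_ne_top, one_mul]
  calc ∫⁻ x, transferOp J 1 g x ∂μ
      = ∑' ι, ∫⁻ x, (ENNReal.ofReal (J (c ι x)))⁻¹ * g (c ι x) ∂μ := by
        simp only [transferOp_one]
        exact lintegral_tsum fun ι => (hterm ι).aemeasurable
    _ = ∑' ι, ∫⁻ x in {y | y 0 = ι}, g x ∂μ := tsum_congr hsymbol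
    _ = ∫⁻ x, g x ∂μ := by
        rw [← lintegral_iUnion hA (fun i j hij => Set.disjoint_left.2 fun y hi hj =>
          hij (hi.symm.trans hj)), Set.iUnion_eq_univ_iff.2 fun y => ⟨y 0, rfl⟩,
          Measure.restrict_univ]

lemma lintegral_transferOp (hJac : IsShiftJacobian μ J) (hJmeas : Measurable J)
    (hJpos : ∀ x, 0 < J x) (k : ℕ) {g : (ℕ → ℕ) → ℝ≥0∞} (hg : Measurable g) :
    ∫⁻ x, transferOp J k g x ∂μ = ∫⁻ x, g x ∂μ := by
  induction k generalizing g with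
  | zero => rw [transferOp_zero]
  | succ k ih =>
    rw [transferOp_succ hJpos, ih (measurable_transferOp hJmeas 1 hg),
      hJac.lintegral_transferOp_one hJmeas hJpos hg]

end IsShiftJacobian

section distortion

variable {J : (ℕ → ℕ) → ℝ} {K : ℝ} {g : (ℕ → ℕ) → ℝ≥0∞}

lemma transferOp_le_mul_transferOp (hJpos : ∀ x, 0 < J x) (hK : 0 ≤ K)
    (hdist : HasBoundedDistortion J K) {k : ℕ} (hk : 1 ≤ k) {x y : ℕ → ℕ}
    (hg : ∀ w : Fin k → ℕ, g (branch w x) = g (branch w y)) :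
    transferOp J k g x ≤ ENNReal.ofReal K * transferOp J k g y := by
  rw [transferOp, transferOp, ← ENNReal.tsum_mul_left]
  refine ENNReal.tsum_le_tsum fun w => ?_
  have hx := jprod_pos hJpos k (branch w x)
  have hy := jprod_pos hJpos k (branch w y)
  rw [hg w, ← mul_assoc, ← ENNReal.ofReal_inv_of_pos hx, ← ENNReal.ofReal_inv_of_pos hy,
    ← ENNReal.ofReal_mul hK]
  gcongr
  rw [← div_eq_mul_inv, le_div_iff₀ hy, inv_mul_le_iff₀ hx, mul_comm]
  exact hdist k hk w y x

variable {μ : Measure (ℕ → ℕ)} [IsProbabilityMeasure μ]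

lemma transferOp_le_mul_lintegral (hJac : IsShiftJacobian μ J) (hJmeas : Measurable J)
    (hJpos : ∀ x, 0 < J x) (hK : 0 ≤ K) (hdist : HasBoundedDistortion J K) {k : ℕ} (hk : 1 ≤ k)
    (hgm : Measurable g) (hg : ∀ (w : Fin k → ℕ) (x y : ℕ → ℕ), g (branch w x) = g (branch w y))
    (x : ℕ → ℕ) : transferOp J k g x ≤ ENNReal.ofReal K * ∫⁻ y, g y ∂μ :=
  calc transferOp J k g x = ∫⁻ _, transferOp J k g x ∂μ := by simp
    _ ≤ ∫⁻ y, ENNReal.ofReal K * transferOp J k g y ∂μ :=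
      lintegral_mono fun y => transferOp_le_mul_transferOp hJpos hK hdist hk (hg · x y)
    _ = ENNReal.ofReal K * ∫⁻ y, g y ∂μ := by
      rw [lintegral_const_mul _ (measurable_transferOp hJmeas k hgm),
        hJac.lintegral_transferOp hJmeas hJpos k hgm]

lemma lintegral_le_mul_transferOp (hJac : IsShiftJacobian μ J) (hJmeas : Measurable J)
    (hJpos : ∀ x, 0 < J x) (hK : 0 ≤ K) (hdist : HasBoundedDistortion J K) {k : ℕ} (hk : 1 ≤ k)
    (hgm : Measurable g) (hg : ∀ (w : Fin k → ℕ) (x y : ℕ → ℕ), g (branch w x) = g (branch w y))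
    (x : ℕ → ℕ) : ∫⁻ y, g y ∂μ ≤ ENNReal.ofReal K * transferOp J k g x :=
  calc ∫⁻ y, g y ∂μ = ∫⁻ y, transferOp J k g y ∂μ :=
      (hJac.lintegral_transferOp hJmeas hJpos k hgm).symm
    _ ≤ ∫⁻ _, ENNReal.ofReal K * transferOp J k g x ∂μ :=
      lintegral_mono fun y => transferOp_le_mul_transferOp hJpos hK hdist hk (hg · y x)
    _ = ENNReal.ofReal K * transferOp J k g x := by simp

end distortion

lemma backAvg_eq_toReal_transferOp {J : (ℕ → ℕ) → ℝ} (hJpos : ∀ x, 0 < J x) (k : ℕ)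
    (x : ℕ → ℕ) (E : Set (ℕ → ℕ)) :
    backAvg J k x E = (transferOp J k (E.indicator fun _ => 1) x).toReal := by
  have hP (w : Fin k → ℕ) := jprod_pos hJpos k (branch w x)
  rw [backAvg, transferOp, ENNReal.tsum_toReal_eq fun w => ?_]
  · refine tsum_congr fun w => ?_
    rw [ENNReal.toReal_mul, ENNReal.toReal_inv, ENNReal.toReal_ofReal (hP w).le]
    by_cases h : branch w x ∈ E <;> simp [h]
  · refine ENNReal.mul_ne_top (ENNReal.inv_ne_top.2 (ENNReal.ofReal_pos.2 (hP w)).ne') ?_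
    by_cases h : branch w x ∈ E <;> simp [h]

lemma backAvg_cylinder_mem_Icc {μ : Measure (ℕ → ℕ)} [IsProbabilityMeasure μ]
    {J : (ℕ → ℕ) → ℝ} (hJac : IsShiftJacobian μ J) (hJmeas : Measurable J)
    (hJpos : ∀ x, 0 < J x) {K : ℝ} (hK : 0 < K) (hdist : HasBoundedDistortion J K)
    (x : ℕ → ℕ) {k₀ k : ℕ} (w₀ : Fin k₀ → ℕ) (hk1 : 1 ≤ k) (hk : k₀ ≤ k) :
    backAvg J k x (cylinder w₀) ∈
      Set.Icc (K⁻¹ * (μ (cylinder w₀)).toReal) (K * (μ (cylinder w₀)).toReal) := by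
  set g := (cylinder w₀).indicator fun _ => (1 : ℝ≥0∞)
  have hgm : Measurable g := measurable_const.indicator (measurableSet_cylinder w₀)
  have hg (w : Fin k → ℕ) (x y : ℕ → ℕ) : g (branch w x) = g (branch w y) :=
    Set.indicator_eq_indicator (branch_mem_cylinder_iff w₀ w hk x y) rfl
  have hint : ∫⁻ y, g y ∂μ = μ (cylinder w₀) := lintegral_indicator_one (measurableSet_cylinder w₀)
  have hupper := transferOp_le_mul_lintegral hJac hJmeas hJpos hK.le hdist hk1 hgm hg x
  have hlower := lintegral_le_mul_transferOp hJac hJmeas hJpos hK.le hdist hk1 hgm hg x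
  rw [hint] at hupper hlower
  have hfin : transferOp J k g x ≠ ⊤ := ne_top_of_le_ne_top (by finiteness) hupper
  rw [backAvg_eq_toReal_transferOp hJpos]
  constructor
  · rw [inv_mul_le_iff₀ hK]
    simpa [ENNReal.toReal_mul, hK.le] using ENNReal.toReal_mono (by finiteness) hlower
  · simpa [ENNReal.toReal_mul, hK.le] using ENNReal.toReal_mono (by finiteness) hupper

theorem stmt10_general (μ : Measure (ℕ → ℕ)) [IsProbabilityMeasure μ]
    (J : (ℕ → ℕ) → ℝ) (hJmeas : Measurable J) (hJpos : ∀ x, 0 < J x)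
    (hJac : ∀ (ι : ℕ) (B : Set (ℕ → ℕ)), MeasurableSet B →
      μ B = ∫⁻ x in {y : ℕ → ℕ | y 0 = ι} ∩ shiftMap ⁻¹' B, ENNReal.ofReal (J x) ∂μ)
    (K : ℝ) (hK : 1 ≤ K)
    (hdist : ∀ k : ℕ, 1 ≤ k → ∀ w : Fin k → ℕ, ∀ x y : ℕ → ℕ,
      jprod J k (branch w x) ≤ K * jprod J k (branch w y)) :
    ∀ (x : ℕ → ℕ) (k₀ : ℕ) (w₀ : Fin k₀ → ℕ),
      limsup (fun n : ℕ =>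
          (1 / (n : ℝ)) * ∑ k ∈ Finset.range n, backAvg J k x (cylinder w₀)) atTop
        ≤ K * (μ (cylinder w₀)).toReal ∧
      liminf (fun n : ℕ =>
          (1 / (n : ℝ)) * ∑ k ∈ Finset.range n, backAvg J k x (cylinder w₀)) atTop
        ≤ limsup (fun n : ℕ =>
          (1 / (n : ℝ)) * ∑ k ∈ Finset.range n, backAvg J k x (cylinder w₀)) atTop ∧
      K⁻¹ * (μ (cylinder w₀)).toReal
        ≤ liminf (fun n : ℕ =>
          (1 / (n : ℝ)) * ∑ k ∈ Finset.range n, backAvg J k x (cylinder w₀)) atTop := by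
  intro x k₀ w₀
  exact limsup_cesaroMean_le_and_le_liminf <| eventually_atTop.2 ⟨max 1 k₀, fun k hk =>
    backAvg_cylinder_mem_Icc hJac hJmeas hJpos (by linarith) hdist x w₀ (le_of_max_le_left hk)
      (le_of_max_le_right hk)⟩

/-- **Lemma 2.12.** For a shift-invariant ergodic probability `μ` on `ℕ^ℕ` with a Jacobian
`Jσ` satisfying uniform bounded distortion with constant `K`, for *every* point `x` and
every cylinder `C`:
`K μ(C) ≥ limsup (1/n) ∑_{k<n} μ_{k,x}(C) ≥ liminf (1/n) ∑_{k<n} μ_{k,x}(C) ≥ K⁻¹ μ(C)`. -/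
theorem stmt10 (μ : Measure (ℕ → ℕ)) [IsProbabilityMeasure μ]
    (herg : Ergodic shiftMap μ)
    (J : (ℕ → ℕ) → ℝ) (hJmeas : Measurable J) (hJpos : ∀ x, 0 < J x)
    (hJac : ∀ (ι : ℕ) (B : Set (ℕ → ℕ)), MeasurableSet B →
      μ B = ∫⁻ x in {y : ℕ → ℕ | y 0 = ι} ∩ shiftMap ⁻¹' B, ENNReal.ofReal (J x) ∂μ)
    (K : ℝ) (hK : 1 ≤ K)
    (hdist : ∀ k : ℕ, 1 ≤ k → ∀ w : Fin k → ℕ, ∀ x y : ℕ → ℕ,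
      jprod J k (branch w x) ≤ K * jprod J k (branch w y)) :
    ∀ (x : ℕ → ℕ) (k₀ : ℕ) (w₀ : Fin k₀ → ℕ),
      limsup (fun n : ℕ =>
          (1 / (n : ℝ)) * ∑ k ∈ Finset.range n, backAvg J k x (cylinder w₀)) atTop
        ≤ K * (μ (cylinder w₀)).toReal ∧
      liminf (fun n : ℕ =>
          (1 / (n : ℝ)) * ∑ k ∈ Finset.range n, backAvg J k x (cylinder w₀)) atTop
        ≤ limsup (fun n : ℕ =>
          (1 / (n : ℝ)) * ∑ k ∈ Finset.range n, backAvg J k x (cylinder w₀)) atTop ∧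
      K⁻¹ * (μ (cylinder w₀)).toReal
        ≤ liminf (fun n : ℕ =>
          (1 / (n : ℝ)) * ∑ k ∈ Finset.range n, backAvg J k x (cylinder w₀)) atTop :=
  stmt10_general μ J hJmeas hJpos hJac K hK hdist
end

section
/- Let Σ = ℕ^ℕ with the one-sided shift σ, and let Jσ : Σ → (0,∞) be a function such that log Jσ has bounded oscillation; set S = Σ_{k≥1} osc_k(log Jσ) < ∞. For x, y, w ∈ Σ and n ≥ 0 define x^n, y^n ∈ Σ by prepending the reversed length-n prefix of w to x and to y respectively (x^n(j) = w(n−1−j) for 0 ≤ j < n and x^n(j) = x(j−n) for j ≥ n). Then the limit J_{x,y}(w) = lim_{n→∞} Jσ^n(x^n)/Jσ^n(y^n) exists, the convergence is uniform over all (x, y, w) ∈ Σ×Σ×Σ, the limit function (x, y, w) ↦ J_{x,y}(w) is continuous on Σ×Σ×Σ, and e^{−S} ≤ J_{x,y}(w) ≤ e^{S} for all (x, y, w). -/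
/-!
Taking logarithms, `log (Jσ^n(x^n) / Jσ^n(y^n))` is the difference of the Birkhoff sums of
`ψ = log Jσ` along `x^n` and `y^n`. Since `σ^i (x^n) = x^(n-i)`, it equals
`∑_{k<n} (ψ(x^(k+1)) - ψ(y^(k+1)))`, and the `k`-th term is at most `osc_{k+1}(ψ)` in absolute
value because `x^(k+1)` and `y^(k+1)` share their first `k + 1` symbols. The Weierstrass M-test
gives uniform convergence of these sums to a continuous limit with values in `[-S, S]`, and
`exp` is uniformly continuous on `[-S, S]`.
-/

open Filter

/-- The set of differences `ψ(x) − ψ(y)` over pairs `x, y` in a common cylinder of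
length `k`. -/
def oscSet (ψ : (ℕ → ℕ) → ℝ) (k : ℕ) : Set ℝ :=
  {r | ∃ (w : Fin k → ℕ) (x y : ℕ → ℕ), x ∈ cylinder w ∧ y ∈ cylinder w ∧ r = ψ x - ψ y}

/-- The `k`-oscillation `osc_k(ψ)`. -/
noncomputable def osc (ψ : (ℕ → ℕ) → ℝ) (k : ℕ) : ℝ := sSup (oscSet ψ k)

/-- `x^n`: prepend the reversed length-`n` prefix of `w` to `x`. -/
def prependRev (w : ℕ → ℕ) (n : ℕ) (x : ℕ → ℕ) : ℕ → ℕ :=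
  fun j => if j < n then w (n - 1 - j) else x (j - n)

open Topology Finset

section Oscillation

variable {ψ : (ℕ → ℕ) → ℝ} {k : ℕ}

lemma sub_mem_oscSet {x y : ℕ → ℕ} (h : ∀ j < k, x j = y j) : ψ x - ψ y ∈ oscSet ψ k :=
  ⟨fun j => x j, x, y, fun _ => rfl, fun j => (h j j.isLt).symm, rfl⟩

lemma osc_nonneg (hb : BddAbove (oscSet ψ k)) : 0 ≤ osc ψ k := by
  simpa [osc] using le_csSup hb (sub_mem_oscSet (ψ := ψ) (x := 0) (y := 0) fun _ _ => rfl)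

lemma abs_sub_le_osc (hb : BddAbove (oscSet ψ k)) {x y : ℕ → ℕ} (h : ∀ j < k, x j = y j) :
    |ψ x - ψ y| ≤ osc ψ k :=
  abs_sub_le_iff.2 ⟨le_csSup hb (sub_mem_oscSet h),
    le_csSup hb (sub_mem_oscSet fun j hj => (h j hj).symm)⟩

lemma continuous_of_tendsto_osc (hb : ∀ k, BddAbove (oscSet ψ k))
    (hosc : Tendsto (osc ψ) atTop (𝓝 0)) : Continuous ψ := by
  refine continuous_iff_continuousAt.2 fun x => Metric.tendsto_nhds.2 fun ε hε => ?_
  obtain ⟨k, hk⟩ := (hosc.eventually (gt_mem_nhds hε)).exists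
  have hcyl : (Set.Iio k).pi (fun j => {x j}) ∈ 𝓝 x :=
    set_pi_mem_nhds (Set.finite_Iio k) fun j _ => (isOpen_discrete _).mem_nhds rfl
  filter_upwards [hcyl] with y hy
  exact (abs_sub_le_osc (hb k) fun j hj => hy j hj).trans_lt hk

end Oscillation

section PrependRev

lemma prependRev_apply_of_lt (w x : ℕ → ℕ) {n j : ℕ} (hj : j < n) :
    prependRev w n x j = w (n - 1 - j) :=
  if_pos hj

lemma shiftMap_prependRev_succ (w x : ℕ → ℕ) (n : ℕ) :
    shiftMap (prependRev w (n + 1) x) = prependRev w n x := by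
  funext j
  simp only [shiftMap, prependRev]
  split_ifs <;> first | omega | (congr 1; omega)

lemma continuous_prependRev (n : ℕ) :
    Continuous fun p : (ℕ → ℕ) × (ℕ → ℕ) => prependRev p.1 n p.2 :=
  continuous_pi fun j => by
    by_cases hj : j < n <;> simp only [prependRev, hj, if_true, if_false] <;> fun_prop

lemma birkhoffSum_prependRev (ψ : (ℕ → ℕ) → ℝ) (w x : ℕ → ℕ) (n : ℕ) :
    birkhoffSum shiftMap ψ n (prependRev w n x) = ∑ k ∈ range n, ψ (prependRev w (k + 1) x) := by
  induction n with
  | zero => rfl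
  | succ n ih => rw [birkhoffSum_succ', shiftMap_prependRev_succ, ih, sum_range_succ, add_comm]

end PrependRev

lemma log_jprod {J : (ℕ → ℕ) → ℝ} (hJpos : ∀ x, 0 < J x) (n : ℕ) (z : ℕ → ℕ) :
    Real.log (jprod J n z) = birkhoffSum shiftMap (fun z => Real.log (J z)) n z :=
  Real.log_prod fun _ _ => (hJpos _).ne'

section LogRatio

def logRatioTerm (ψ : (ℕ → ℕ) → ℝ) (k : ℕ) (p : (ℕ → ℕ) × (ℕ → ℕ) × (ℕ → ℕ)) : ℝ :=
  ψ (prependRev p.2.2 (k + 1) p.1) - ψ (prependRev p.2.2 (k + 1) p.2.1)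

variable {ψ : (ℕ → ℕ) → ℝ}

lemma birkhoffSum_prependRev_sub (n : ℕ) (x y w : ℕ → ℕ) :
    birkhoffSum shiftMap ψ n (prependRev w n x) - birkhoffSum shiftMap ψ n (prependRev w n y) =
      ∑ k ∈ range n, logRatioTerm ψ k (x, y, w) := by
  simp only [birkhoffSum_prependRev, logRatioTerm, sum_sub_distrib]

lemma abs_logRatioTerm_le (hb : ∀ k, BddAbove (oscSet ψ k)) (k : ℕ)
    (p : (ℕ → ℕ) × (ℕ → ℕ) × (ℕ → ℕ)) : |logRatioTerm ψ k p| ≤ osc ψ (k + 1) :=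
  abs_sub_le_osc (hb _) fun _ hj => by simp only [prependRev_apply_of_lt _ _ hj]

lemma continuous_logRatioTerm (hψ : Continuous ψ) (k : ℕ) : Continuous (logRatioTerm ψ k) := by
  have h := continuous_prependRev (k + 1)
  unfold logRatioTerm
  fun_prop

lemma sum_logRatioTerm_mem_Icc (hb : ∀ k, BddAbove (oscSet ψ k))
    (hsum : Summable fun k => osc ψ (k + 1)) (n : ℕ) (p : (ℕ → ℕ) × (ℕ → ℕ) × (ℕ → ℕ)) :
    ∑ k ∈ range n, logRatioTerm ψ k p ∈
      Set.Icc (-∑' k, osc ψ (k + 1)) (∑' k, osc ψ (k + 1)) := by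
  rw [Set.mem_Icc, ← abs_le]
  calc |∑ k ∈ range n, logRatioTerm ψ k p|
      ≤ ∑ k ∈ range n, osc ψ (k + 1) := abs_sum_le_sum_abs _ _ |>.trans <|
        sum_le_sum fun k _ => abs_logRatioTerm_le hb k p
    _ ≤ ∑' k, osc ψ (k + 1) := hsum.sum_le_tsum _ fun k _ => osc_nonneg (hb _)

lemma tendstoUniformly_sum_logRatioTerm (hb : ∀ k, BddAbove (oscSet ψ k))
    (hsum : Summable fun k => osc ψ (k + 1)) :
    TendstoUniformly (fun n p => ∑ k ∈ range n, logRatioTerm ψ k p)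
      (fun p => ∑' k, logRatioTerm ψ k p) atTop :=
  tendstoUniformly_tsum_nat hsum fun k p => abs_logRatioTerm_le hb k p

end LogRatio

lemma jprod_div_jprod_prependRev {J : (ℕ → ℕ) → ℝ} (hJpos : ∀ x, 0 < J x) (n : ℕ)
    (x y w : ℕ → ℕ) :
    jprod J n (prependRev w n x) / jprod J n (prependRev w n y) =
      Real.exp (∑ k ∈ range n, logRatioTerm (fun z => Real.log (J z)) k (x, y, w)) := by
  have hpos : ∀ z, 0 < jprod J n z := fun z => prod_pos fun _ _ => hJpos _
  rw [← birkhoffSum_prependRev_sub, ← log_jprod hJpos, ← log_jprod hJpos, Real.exp_sub,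
    Real.exp_log (hpos _), Real.exp_log (hpos _)]

/-- **Lemma A.2.** If `log Jσ` has bounded oscillation with `S = ∑_{k≥1} osc_k(log Jσ)`,
then `J_{x,y}(w) = lim_n Jσ^n(x^n)/Jσ^n(y^n)` exists uniformly in `(x,y,w)`, is
continuous, and satisfies `e^{-S} ≤ J_{x,y}(w) ≤ e^{S}`. -/
theorem stmt11 (J : (ℕ → ℕ) → ℝ) (hJpos : ∀ x, 0 < J x)
    (hbdd : ∀ k : ℕ, BddAbove (oscSet (fun z => Real.log (J z)) k))
    (hsum : Summable fun k : ℕ => osc (fun z => Real.log (J z)) (k + 1)) :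
    ∃ Jlim : (ℕ → ℕ) → (ℕ → ℕ) → (ℕ → ℕ) → ℝ,
      TendstoUniformly
        (fun (n : ℕ) (p : (ℕ → ℕ) × (ℕ → ℕ) × (ℕ → ℕ)) =>
          jprod J n (prependRev p.2.2 n p.1) / jprod J n (prependRev p.2.2 n p.2.1))
        (fun p => Jlim p.1 p.2.1 p.2.2) atTop ∧
      Continuous (fun p : (ℕ → ℕ) × (ℕ → ℕ) × (ℕ → ℕ) => Jlim p.1 p.2.1 p.2.2) ∧
      ∀ x y w : ℕ → ℕ,
        Real.exp (-(∑' k : ℕ, osc (fun z => Real.log (J z)) (k + 1))) ≤ Jlim x y w ∧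
        Jlim x y w ≤ Real.exp (∑' k : ℕ, osc (fun z => Real.log (J z)) (k + 1)) := by
  set ψ : (ℕ → ℕ) → ℝ := fun z => Real.log (J z)
  have hlim := tendstoUniformly_sum_logRatioTerm hbdd hsum
  have hF := sum_logRatioTerm_mem_Icc hbdd hsum
  set S := ∑' k, osc ψ (k + 1)
  have hG : ∀ p, ∑' k, logRatioTerm ψ k p ∈ Set.Icc (-S) S :=
    fun p => isClosed_Icc.mem_of_tendsto (hlim.tendsto_at p) (Eventually.of_forall (hF · p))
  have hψ : Continuous ψ :=
    continuous_of_tendsto_osc hbdd ((tendsto_add_atTop_iff_nat 1).1 hsum.tendsto_atTop_zero)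
  refine ⟨fun x y w => Real.exp (∑' k, logRatioTerm ψ k (x, y, w)), ?_, ?_,
    fun x y w => ⟨Real.exp_le_exp.2 (hG _).1, Real.exp_le_exp.2 (hG _).2⟩⟩
  · simp_rw [jprod_div_jprod_prependRev hJpos]
    exact (isCompact_Icc.uniformContinuousOn_of_continuous Real.continuous_exp.continuousOn)
      |>.comp_tendstoUniformly hF hG hlim
  · exact Real.continuous_exp.comp <| hlim.continuous <| Frequently.of_forall fun _ =>
      continuous_finsetSum _ fun k _ => continuous_logRatioTerm hψ k
end
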